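/- arXiv:math/0108013 — 4 statements merged into one kernel-verified Lean document; each statement's English description precedes it below -/
import Mathlib

section
/- Let P be a full-dimensional lattice polytope whose lattice points affinely generate ℤ^n, R a commutative ring, v ∈ Col(P) and λ ∈ R. Then the map S_P → R[ℤ^{n+1}], z ↦ z·(1 + λv)^{ht_v(z)}, is a homomorphism from S_P to the multiplicative monoid of R[ℤ^{n+1}] whose values lie in R[S_P]; it therefore induces a graded R-algebra endomorphism e_v^λ of R[P]. These endomorphisms satisfy e_v^λ ∘ e_v^μ = e_v^{λ+μ} for all λ, μ ∈ R and e_v^0 = id; in particular each e_v^λ is a graded R-algebra automorphism of R[P] with inverse e_v^{−λ}. -/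
open Set

noncomputable section

/-- The real point corresponding to a lattice point of `ℤⁿ`. -/
def toR {n : ℕ} (z : Fin n → ℤ) : Fin n → ℝ := fun i => (z i : ℝ)

/-- A lattice polytope, described as the convex hull of a nonempty finite set of
lattice points. -/
structure LatticePolytope (n : ℕ) where
  verts : Finset (Fin n → ℤ)
  nonem : verts.Nonempty

namespace LatticePolytope

variable {n : ℕ}

/-- The underlying set of the polytope. -/
def carrier (P : LatticePolytope n) : Set (Fin n → ℝ) :=
  convexHull ℝ (↑(P.verts.image toR))

/-- `P` is full-dimensional. -/
def IsFullDim (P : LatticePolytope n) : Prop :=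
  (interior P.carrier).Nonempty

/-- The set `L_P` of lattice points of `P`. -/
def latticePoints (P : LatticePolytope n) : Set (Fin n → ℤ) :=
  {z | toR z ∈ P.carrier}

/-- The lattice points of `P` affinely generate `ℤⁿ`. -/
def AffGen (P : LatticePolytope n) : Prop :=
  ∀ x₀ ∈ P.latticePoints,
    AddSubgroup.closure {y | ∃ x ∈ P.latticePoints, y = x - x₀} =
      (⊤ : AddSubgroup (Fin n → ℤ))

/-- The `ℝ`-linear extension of an additive form on `ℤⁿ`. -/
def formR (φ : (Fin n → ℤ) →+ ℤ) : (Fin n → ℝ) → ℝ :=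
  fun x => ∑ i, x i * (φ (Pi.single i 1) : ℝ)

/-- A facet of `P`, encoded together with its support form `⟨F,-⟩` (a surjective
additive form whose minimum `b_F` over `P` is attained exactly on the facet, the
facet being `(n-1)`-dimensional). -/
structure Facet (P : LatticePolytope n) where
  form : (Fin n → ℤ) →+ ℤ
  surj : Function.Surjective form
  b : ℤ
  min_le : ∀ x ∈ P.carrier, (b : ℝ) ≤ formR form x
  attained : ∃ x ∈ P.carrier, formR form x = (b : ℝ)
  dim : Module.finrank ℝ (vectorSpan ℝ {x ∈ P.carrier | formR form x = (b : ℝ)}) + 1 = n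

/-- The underlying set of a facet. -/
def Facet.set {P : LatticePolytope n} (F : P.Facet) : Set (Fin n → ℝ) :=
  {x ∈ P.carrier | formR F.form x = (F.b : ℝ)}

/-- `F` is a base facet for `v`, i.e. `v` is a column vector with base facet `F`. -/
def IsBaseFacet (P : LatticePolytope n) (v : Fin n → ℤ) (F : P.Facet) : Prop :=
  v ≠ 0 ∧ ∀ x : Fin n → ℤ, toR x ∈ P.carrier → toR x ∉ F.set →
    toR (x + v) ∈ P.carrier

/-- `v` is a column vector of `P`. -/
def IsColVec (P : LatticePolytope n) (v : Fin n → ℤ) : Prop :=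
  ∃ F : P.Facet, P.IsBaseFacet v F

/-- `Col(P)`, the set of column vectors of `P`. -/
def Col (P : LatticePolytope n) : Set (Fin n → ℤ) := {v | P.IsColVec v}

/-- The product `uv` of the column vectors `u` and `v` exists. -/
def ProdEx (P : LatticePolytope n) (u v : Fin n → ℤ) : Prop :=
  P.IsColVec u ∧ P.IsColVec v ∧ u + v ≠ 0 ∧
    ∀ Fu Fv : P.Facet, P.IsBaseFacet u Fu → P.IsBaseFacet v Fv →
      ∀ x : Fin n → ℤ, toR x ∈ P.carrier → toR x ∉ Fu.set → toR (x + u) ∉ Fv.set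

/-- `P` is balanced: `⟨P_u, v⟩ ≤ 1` for all column vectors `u, v`. -/
def Balanced (P : LatticePolytope n) : Prop :=
  ∀ u v : Fin n → ℤ, ∀ F : P.Facet, P.IsBaseFacet u F → P.IsColVec v → F.form v ≤ 1

/-- Weak existence of the product of a (nonempty) list of column vectors:
some bracketing makes all the recursively formed pairwise products exist. -/
inductive WeakProd (P : LatticePolytope n) : List (Fin n → ℤ) → Prop
  | single (v : Fin n → ℤ) (h : P.IsColVec v) : WeakProd P [v]
  | mul (L₁ L₂ : List (Fin n → ℤ)) (h₁ : WeakProd P L₁) (h₂ : WeakProd P L₂)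
      (h : P.ProdEx L₁.sum L₂.sum) : WeakProd P (L₁ ++ L₂)

/-- Strong existence of the product of a list of column vectors: all consecutive
products exist and all sums over intervals of length at least two are nonzero. -/
def StrongProd (P : LatticePolytope n) (L : List (Fin n → ℤ)) : Prop :=
  L ≠ [] ∧ (∀ x ∈ L, P.IsColVec x) ∧
  (∀ i : ℕ, ∀ h : i + 1 < L.length,
      P.ProdEx (L.get ⟨i, Nat.lt_of_succ_lt h⟩) (L.get ⟨i + 1, h⟩)) ∧
  (∀ r s : ℕ, r < s → s < L.length → ((L.drop r).take (s + 1 - r)).sum ≠ 0)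

/-- `[V]` : the set of strongly existing products of elements of `V`. -/
def bra (P : LatticePolytope n) (V : Set (Fin n → ℤ)) : Set (Fin n → ℤ) :=
  {w | ∃ L : List (Fin n → ℤ), (∀ x ∈ L, x ∈ V) ∧ P.StrongProd L ∧ L.sum = w}

/-- `⟨V⟩` : the set of weakly existing products of elements of `V`. -/
def ket (P : LatticePolytope n) (V : Set (Fin n → ℤ)) : Set (Fin n → ℤ) :=
  {w | ∃ L : List (Fin n → ℤ), (∀ x ∈ L, x ∈ V) ∧ P.WeakProd L ∧ L.sum = w}

end LatticePolytope

/-- An admissible finite directed graph (on vertex set `Fin k`): no isolated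
vertices, no loops, and an edge `a → b` is the unique directed path from `a` to
`b`. -/
structure GoodGraph (k : ℕ) (E : Fin k → Fin k → Prop) : Prop where
  no_isolated : ∀ a, (∃ b, E a b) ∨ (∃ b, E b a)
  no_loop : ∀ a, ¬ E a a
  unique_path : ∀ a b, E a b →
    ¬ ∃ c, Relation.TransGen E a c ∧ Relation.TransGen E c b

/-- A `Y`-graph: every vertex is the endpoint of at most one edge. -/
def IsYGraph (k : ℕ) (E : Fin k → Fin k → Prop) : Prop :=
  ∀ a b c, E b a → E c a → b = c

namespace LatticePolytope

variable {n : ℕ}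

/-- The graph `E` supports the system `V`: `E` is admissible, and equivalence
classes of paths (i.e. reachable pairs of vertices) are in bijection with `[V]`
compatibly with the partial product structures. -/
def Supports (P : LatticePolytope n) (V : Set (Fin n → ℤ)) (k : ℕ)
    (E : Fin k → Fin k → Prop) : Prop :=
  GoodGraph k E ∧
  ∃ f : {w // w ∈ P.bra V} → {p : Fin k × Fin k // Relation.TransGen E p.1 p.2},
    Function.Bijective f ∧
    ∀ u v : {w // w ∈ P.bra V},
      (P.ProdEx u.1 v.1 ↔ (f u).1.2 = (f v).1.1) ∧
      ∀ h : u.1 + v.1 ∈ P.bra V, P.ProdEx u.1 v.1 →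
        (f ⟨u.1 + v.1, h⟩).1 = ((f u).1.1, (f v).1.2)

/-- `V` is a rigid system of column vectors of `P`. -/
def IsRigid (P : LatticePolytope n) (V : Set (Fin n → ℤ)) : Prop :=
  V ⊆ P.Col ∧
  (∀ w, w ∈ P.bra V → -w ∉ P.bra V) ∧
  P.bra V = P.ket V ∧
  ∃ (k : ℕ) (E : Fin k → Fin k → Prop), P.Supports V k E

/-- `V` is a `Y`-rigid system of column vectors of `P`. -/
def IsYRigid (P : LatticePolytope n) (V : Set (Fin n → ℤ)) : Prop :=
  V ⊆ P.Col ∧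
  (∀ w, w ∈ P.bra V → -w ∉ P.bra V) ∧
  P.bra V = P.ket V ∧
  ∃ (k : ℕ) (E : Fin k → Fin k → Prop), IsYGraph k E ∧ P.Supports V k E

/-- `w` is an irreducible element of `[V]`. -/
def Irred (P : LatticePolytope n) (V : Set (Fin n → ℤ)) (w : Fin n → ℤ) : Prop :=
  w ∈ P.bra V ∧
  ¬ ∃ u v : Fin n → ℤ, u ∈ P.ket V ∧ v ∈ P.ket V ∧ P.ProdEx u v ∧ u + v = w

/-- The submonoid `S_P ⊆ ℤ^{n+1}` generated by `{(x,1) : x ∈ L_P}`. -/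
def SP (P : LatticePolytope n) : AddSubmonoid ((Fin n → ℤ) × ℤ) :=
  AddSubmonoid.closure {p | ∃ x ∈ P.latticePoints, p = (x, (1 : ℤ))}

/-- The height of `z ∈ ℤ^{n+1}` over the facet `F`. -/
def htF {P : LatticePolytope n} (F : P.Facet) (z : (Fin n → ℤ) × ℤ) : ℤ :=
  F.form z.1 - z.2 * F.b

end LatticePolytope

/-- `P` is `Col`-divisible: conditions (CD1) and (CD2) on products of column
vectors. -/
def LatticePolytope.ColDivisible {n : ℕ} (P : LatticePolytope n) : Prop :=
  (∀ a b c : Fin n → ℤ, a ≠ b → P.ProdEx a c → P.ProdEx b c →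
      ∃ d, (P.ProdEx d b ∧ d + b = a) ∨ (P.ProdEx d a ∧ d + a = b)) ∧
  (∀ a b c d : Fin n → ℤ, P.ProdEx a b → P.ProdEx c d → a + b = c + d → a ≠ c →
      ∃ t, (P.ProdEx c t ∧ c + t = a ∧ P.ProdEx t b ∧ t + b = d) ∨
           (P.ProdEx a t ∧ a + t = c ∧ P.ProdEx t d ∧ t + d = b))

/-- A facet is a base facet if it is the base facet of some column vector. -/
def LatticePolytope.IsBase {n : ℕ} (P : LatticePolytope n) (F : P.Facet) : Prop :=
  ∃ z, P.IsBaseFacet z F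

/-- A column vector is terminal if it has positive height over no base facet. -/
def LatticePolytope.TerminalVec {n : ℕ} (P : LatticePolytope n) (v : Fin n → ℤ) : Prop :=
  P.IsColVec v ∧ ¬ ∃ F : P.Facet, P.IsBase F ∧ 0 < F.form v

/-- The unit `N`-simplex `conv(0, e_1, …, e_N) ⊆ ℝ^N` as a lattice polytope. -/
def unitSimplex (N : ℕ) : LatticePolytope N where
  verts := insert 0 (Finset.univ.image fun i : Fin N => Pi.single i (1 : ℤ))
  nonem := ⟨0, Finset.mem_insert_self _ _⟩

/-- Doubling of `P` along the facet with support form `φ` (with `b = 0`), where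
`u` is a fixed lattice vector with `φ u = 1`: the convex hull of `P × {0}` and
`ρ(P)`, `ρ(x) = (x - φ(x)·u, φ(x))`. -/
def LatticePolytope.dbl {n : ℕ} (P : LatticePolytope n) (φ : (Fin n → ℤ) →+ ℤ)
    (u : Fin n → ℤ) : LatticePolytope (n + 1) where
  verts := (P.verts.image fun x => Fin.snoc x (0 : ℤ)) ∪
           (P.verts.image fun x => Fin.snoc (x - φ x • u) (φ x))
  nonem := (P.nonem.image _).mono Finset.subset_union_left

/-- The polytopal algebra `R[P] = R[S_P]`, realized as the subalgebra of
`R[ℤ^{n+1}]` generated by the monomials `(x,1)`, `x ∈ L_P`. -/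
def polyAlg (R : Type) [CommRing R] {n : ℕ} (P : LatticePolytope n) :
    Subalgebra R (AddMonoidAlgebra R ((Fin n → ℤ) × ℤ)) :=
  Algebra.adjoin R
    {a | ∃ x ∈ P.latticePoints, a = AddMonoidAlgebra.single (x, (1 : ℤ)) (1 : R)}

/-- The multiplicative map `z ↦ z·(1 + λv)^{ht_v z}` on `ℤ^{n+1}`. -/
def phiMap (R : Type) [CommRing R] {n : ℕ} {P : LatticePolytope n}
    (v : Fin n → ℤ) (F : P.Facet) (lam : R) (z : (Fin n → ℤ) × ℤ) :
    AddMonoidAlgebra R ((Fin n → ℤ) × ℤ) :=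
  AddMonoidAlgebra.single z 1 *
    (1 + AddMonoidAlgebra.single ((v, (0 : ℤ))) lam) ^ (LatticePolytope.htF F z).toNat

/-- An element of `R[ℤ^{n+1}]` is homogeneous of degree `d`. -/
def Homog (R : Type) [CommRing R] {n : ℕ}
    (a : AddMonoidAlgebra R ((Fin n → ℤ) × ℤ)) (d : ℕ) : Prop :=
  ∀ s ∈ a.coeff.support, s.2 = (d : ℤ)

/-- `e` is the elementary automorphism `e_v^λ` of `R[P]`: on monomials from `S_P`
it is given by `z ↦ z·(1 + λv)^{ht_v z}`. -/
def ElemAutProp (R : Type) [CommRing R] {n : ℕ} {P : LatticePolytope n}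
    (v : Fin n → ℤ) (F : P.Facet) (lam : R)
    (e : polyAlg R P →ₐ[R] polyAlg R P) : Prop :=
  ∀ z ∈ P.SP, ∀ hz : AddMonoidAlgebra.single z (1 : R) ∈ polyAlg R P,
    ((e ⟨AddMonoidAlgebra.single z 1, hz⟩ : polyAlg R P) :
        AddMonoidAlgebra R ((Fin n → ℤ) × ℤ)) = phiMap R v F lam z

/-- `e` is a graded endomorphism of `R[P]`. -/
def IsGradedEndo (R : Type) [CommRing R] {n : ℕ} {P : LatticePolytope n}
    (e : polyAlg R P →ₐ[R] polyAlg R P) : Prop :=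
  ∀ (a : polyAlg R P) (d : ℕ), Homog R (a : AddMonoidAlgebra R ((Fin n → ℤ) × ℤ)) d →
    Homog R ((e a : polyAlg R P) : AddMonoidAlgebra R ((Fin n → ℤ) × ℤ)) d

namespace Statement5Aux

open LatticePolytope AddMonoidAlgebra Finset

variable {n : ℕ}

lemma form_eq_sum (φ : (Fin n → ℤ) →+ ℤ) (x : Fin n → ℤ) :
    φ x = ∑ i, x i * φ (Pi.single i 1) := by
  conv_lhs => rw [← Finset.univ_sum_single x, map_sum]
  refine Finset.sum_congr rfl fun i _ => ?_
  have h : Pi.single i (x i) = x i • (Pi.single i (1 : ℤ) : Fin n → ℤ) := by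
    ext j
    by_cases hj : j = i
    · subst hj; simp
    · simp [Pi.single_eq_of_ne hj]
  rw [h, map_zsmul, smul_eq_mul]

lemma formR_toR (φ : (Fin n → ℤ) →+ ℤ) (x : Fin n → ℤ) :
    formR φ (toR x) = (φ x : ℝ) := by
  rw [form_eq_sum φ x, formR]
  push_cast
  rfl

lemma formR_linear (φ : (Fin n → ℤ) →+ ℤ) : IsLinearMap ℝ (formR φ) := by
  constructor
  · intro x y
    simp [formR, add_mul, Finset.sum_add_distrib]
  · intro c x
    simp [formR, Finset.mul_sum, mul_assoc]

lemma vert_mem_carrier {P : LatticePolytope n} {s : Fin n → ℤ} (hs : s ∈ P.verts) :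
    toR s ∈ P.carrier :=
  subset_convexHull ℝ _ (by simpa using Finset.mem_image_of_mem toR hs)

lemma vert_mem_lattice {P : LatticePolytope n} {s : Fin n → ℤ} (hs : s ∈ P.verts) :
    s ∈ P.latticePoints := vert_mem_carrier hs

lemma formR_le_of_verts {P : LatticePolytope n} (φ : (Fin n → ℤ) →+ ℤ) (M : ℝ)
    (hM : ∀ s ∈ P.verts, formR φ (toR s) ≤ M) :
    ∀ x ∈ P.carrier, formR φ x ≤ M := by
  intro x hx
  refine convexHull_min ?_ (convex_halfSpace_le (formR_linear φ) M) hx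
  intro y hy
  simp only [Finset.coe_image, Set.mem_image, Finset.mem_coe] at hy
  obtain ⟨s, hs, rfl⟩ := hy
  exact hM s hs

lemma formR_ge_of_verts {P : LatticePolytope n} (φ : (Fin n → ℤ) →+ ℤ) (M : ℝ)
    (hM : ∀ s ∈ P.verts, M ≤ formR φ (toR s)) :
    ∀ x ∈ P.carrier, M ≤ formR φ x := by
  intro x hx
  refine convexHull_min ?_ (convex_halfSpace_ge (formR_linear φ) M) hx
  intro y hy
  simp only [Finset.coe_image, Set.mem_image, Finset.mem_coe] at hy
  obtain ⟨s, hs, rfl⟩ := hy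
  exact hM s hs

lemma form_bounded (P : LatticePolytope n) (φ : (Fin n → ℤ) →+ ℤ) :
    ∃ M : ℤ, ∀ x ∈ P.latticePoints, φ x ≤ M := by
  obtain ⟨s₀, hs₀, hmax⟩ := P.verts.exists_max_image (fun s => φ s) P.nonem
  refine ⟨φ s₀, fun x hx => ?_⟩
  have h := formR_le_of_verts (P := P) φ (φ s₀ : ℝ)
    (fun s hs => by rw [formR_toR]; exact_mod_cast hmax s hs) (toR x) hx
  rw [formR_toR] at h
  exact_mod_cast h

lemma b_le_form {P : LatticePolytope n} (F : P.Facet) {x : Fin n → ℤ}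
    (hx : x ∈ P.latticePoints) : F.b ≤ F.form x := by
  have h := F.min_le (toR x) hx
  rw [formR_toR] at h
  exact_mod_cast h

lemma exists_vert_on_facet (P : LatticePolytope n) (F : P.Facet) :
    ∃ s ∈ P.verts, F.form s = F.b := by
  obtain ⟨s₀, hs₀, hmin⟩ := P.verts.exists_min_image (fun s => F.form s) P.nonem
  refine ⟨s₀, hs₀, le_antisymm ?_ (b_le_form F (vert_mem_lattice hs₀))⟩
  obtain ⟨x, hx, hxb⟩ := F.attained
  have h := formR_ge_of_verts (P := P) F.form (F.form s₀ : ℝ)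
    (fun s hs => by rw [formR_toR]; exact_mod_cast hmin s hs) x hx
  rw [hxb] at h
  exact_mod_cast h

lemma exists_pos_ht (P : LatticePolytope n) (hgen : P.AffGen) (F : P.Facet) :
    ∃ x ∈ P.latticePoints, F.b < F.form x := by
  by_contra h
  push_neg at h
  obtain ⟨s₀, hs₀, hs₀b⟩ := exists_vert_on_facet P F
  have hs₀L : s₀ ∈ P.latticePoints := vert_mem_lattice hs₀
  have hker : AddSubgroup.closure {y | ∃ x ∈ P.latticePoints, y = x - s₀} ≤ F.form.ker := by
    rw [AddSubgroup.closure_le]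
    rintro _ ⟨x, hx, rfl⟩
    have h1 : F.form x ≤ F.b := h x hx
    have h2 : F.b ≤ F.form x := b_le_form F hx
    simp only [SetLike.mem_coe, AddMonoidHom.mem_ker, map_sub]
    omega
  rw [hgen s₀ hs₀L] at hker
  obtain ⟨y, hy⟩ := F.surj 1
  have : F.form y = 0 := hker (AddSubgroup.mem_top y)
  omega

end Statement5Aux
namespace Statement5Aux

open LatticePolytope AddMonoidAlgebra Finset

variable {n : ℕ}

lemma add_v_lattice {P : LatticePolytope n} {v : Fin n → ℤ} {F : P.Facet}
    (hv : P.IsBaseFacet v F) {x : Fin n → ℤ} (hx : x ∈ P.latticePoints)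
    (hxb : F.b < F.form x) : x + v ∈ P.latticePoints := by
  refine hv.2 x hx ?_
  intro hmem
  have : formR F.form (toR x) = (F.b : ℝ) := hmem.2
  rw [formR_toR] at this
  have : F.form x = F.b := by exact_mod_cast this
  omega

lemma iterate_mem {P : LatticePolytope n} {v : Fin n → ℤ} {F : P.Facet}
    (hv : P.IsBaseFacet v F) (hc : 0 ≤ F.form v) {x : Fin n → ℤ}
    (hx : x ∈ P.latticePoints) (hxb : F.b < F.form x) (k : ℕ) :
    x + (k : ℤ) • v ∈ P.latticePoints := by
  induction k with
  | zero => simpa using hx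
  | succ k ih =>
    have hform : F.b < F.form (x + (k : ℤ) • v) := by
      rw [map_add, map_zsmul, smul_eq_mul]
      have : 0 ≤ (k : ℤ) * F.form v := mul_nonneg (by positivity) hc
      omega
    have h2 := add_v_lattice hv ih hform
    have : x + ((k : ℤ) + 1) • v = (x + (k : ℤ) • v) + v := by
      rw [add_smul, one_smul, add_assoc]
    rw [Nat.cast_succ, this]
    exact h2

lemma form_v_neg {P : LatticePolytope n} {v : Fin n → ℤ} {F : P.Facet}
    (hgen : P.AffGen) (hv : P.IsBaseFacet v F) : F.form v < 0 := by
  by_contra hc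
  push_neg at hc
  obtain ⟨x, hx, hxb⟩ := exists_pos_ht P hgen F
  obtain ⟨j, hj⟩ := Function.ne_iff.1 hv.1
  -- choose ψ with ψ v ≥ 1
  have : ∃ ψ : (Fin n → ℤ) →+ ℤ, 1 ≤ ψ v := by
    rcases lt_or_gt_of_ne (show v j ≠ 0 by simpa using hj) with h | h
    · refine ⟨-(Pi.evalAddMonoidHom (fun _ => ℤ) j), ?_⟩
      have : (-(Pi.evalAddMonoidHom (fun _ => ℤ) j)) v = -(v j) := rfl
      omega
    · refine ⟨Pi.evalAddMonoidHom (fun _ => ℤ) j, ?_⟩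
      have : (Pi.evalAddMonoidHom (fun _ => ℤ) j) v = v j := rfl
      omega
  obtain ⟨ψ, hψ⟩ := this
  obtain ⟨M, hM⟩ := form_bounded P ψ
  set k : ℕ := (M - ψ x + 1).toNat with hk
  have hmem := iterate_mem hv hc hx hxb k
  have hbound := hM _ hmem
  rw [map_add, map_zsmul, smul_eq_mul] at hbound
  have h1 : (k : ℤ) = max (M - ψ x + 1) 0 := Int.toNat_of_nonneg (le_max_right _ _) ▸ by
    simp [hk, Int.toNat_eq_max]
  have h2 : (k : ℤ) * ψ v ≥ (k : ℤ) := by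
    nlinarith [le_max_left (M - ψ x + 1) 0, le_max_right (M - ψ x + 1) 0]
  omega

lemma form_v_eq {P : LatticePolytope n} {v : Fin n → ℤ} {F : P.Facet}
    (hgen : P.AffGen) (hv : P.IsBaseFacet v F) : F.form v = -1 := by
  have hneg := form_v_neg hgen hv
  set c : ℤ := -F.form v with hcdef
  have hc1 : 1 ≤ c := by omega
  -- all heights divisible by c
  have hdvd : ∀ m : ℕ, ∀ x ∈ P.latticePoints, (F.form x - F.b).toNat = m →
      c ∣ (F.form x - F.b) := by
    intro m
    induction m using Nat.strong_induction_on with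
    | _ m ih =>
      intro x hx hm
      rcases eq_or_lt_of_le (b_le_form F hx) with h | h
      · rw [← h]; simp
      · have hxv : x + v ∈ P.latticePoints := add_v_lattice hv hx h
        have h2 : F.b ≤ F.form (x + v) := b_le_form F hxv
        have h3 : F.form (x + v) = F.form x - c := by
          rw [map_add]; omega
        have h4 : (F.form (x + v) - F.b).toNat < m := by omega
        have h5 := ih _ h4 (x + v) hxv rfl
        have : F.form x - F.b = (F.form (x + v) - F.b) + c := by omega
        rw [this]
        exact dvd_add h5 dvd_rfl
  obtain ⟨s₀, hs₀, hs₀b⟩ := exists_vert_on_facet P F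
  have hs₀L : s₀ ∈ P.latticePoints := vert_mem_lattice hs₀
  have hker : AddSubgroup.closure {y | ∃ x ∈ P.latticePoints, y = x - s₀} ≤
      AddSubgroup.comap F.form (AddSubgroup.zmultiples c) := by
    rw [AddSubgroup.closure_le]
    rintro _ ⟨x, hx, rfl⟩
    simp only [SetLike.mem_coe, AddSubgroup.mem_comap, map_sub]
    rw [AddSubgroup.mem_zmultiples_iff]
    obtain ⟨t, ht⟩ := hdvd _ x hx rfl
    exact ⟨t, by rw [smul_eq_mul, mul_comm t c]; omega⟩
  rw [hgen s₀ hs₀L] at hker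
  obtain ⟨y, hy⟩ := F.surj 1
  have := hker (AddSubgroup.mem_top y)
  simp only [AddSubgroup.mem_comap, hy, AddSubgroup.mem_zmultiples_iff] at this
  obtain ⟨t, ht⟩ := this
  rw [smul_eq_mul] at ht
  have hcd : c ∣ 1 := ⟨t, by rw [mul_comm]; omega⟩
  have := Int.le_of_dvd one_pos hcd
  omega

end Statement5Aux
namespace Statement5Aux

open LatticePolytope AddMonoidAlgebra Finset

variable {n : ℕ}

lemma htF_add {P : LatticePolytope n} (F : P.Facet) (z w : (Fin n → ℤ) × ℤ) :
    htF F (z + w) = htF F z + htF F w := by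
  simp only [htF, Prod.fst_add, Prod.snd_add, map_add]
  ring

lemma htF_zero {P : LatticePolytope n} (F : P.Facet) : htF F 0 = 0 := by
  simp [htF]

lemma gen_mem_SP {P : LatticePolytope n} {x : Fin n → ℤ} (hx : x ∈ P.latticePoints) :
    ((x, (1 : ℤ)) : (Fin n → ℤ) × ℤ) ∈ P.SP :=
  AddSubmonoid.subset_closure ⟨x, hx, rfl⟩

lemma ht_nonneg {P : LatticePolytope n} (F : P.Facet) {z : (Fin n → ℤ) × ℤ}
    (hz : z ∈ P.SP) : 0 ≤ htF F z := by
  induction hz using AddSubmonoid.closure_induction with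
  | mem x hx =>
    obtain ⟨y, hy, rfl⟩ := hx
    have := b_le_form F hy
    simp only [htF]
    omega
  | zero => rw [htF_zero]
  | add x y _ _ ihx ihy => rw [htF_add]; omega

lemma add_v_mem {P : LatticePolytope n} {v : Fin n → ℤ} {F : P.Facet}
    (hv : P.IsBaseFacet v F) {w : (Fin n → ℤ) × ℤ} (hw : w ∈ P.SP) :
    1 ≤ htF F w → w + ((v, (0 : ℤ)) : (Fin n → ℤ) × ℤ) ∈ P.SP := by
  induction hw using AddSubmonoid.closure_induction with
  | mem x hx =>
    intro h1
    obtain ⟨y, hy, rfl⟩ := hx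
    simp only [htF] at h1
    have hyb : F.b < F.form y := by omega
    have hyv : y + v ∈ P.latticePoints := add_v_lattice hv hy hyb
    have heq : ((y, (1 : ℤ)) : (Fin n → ℤ) × ℤ) + (v, (0 : ℤ)) = (y + v, (1 : ℤ)) := by
      simp [Prod.ext_iff]
    rw [heq]
    exact gen_mem_SP hyv
  | zero =>
    intro h1
    rw [htF_zero] at h1
    omega
  | add x y hx hy ihx ihy =>
    intro h1
    rw [htF_add] at h1
    have hnx := ht_nonneg F hx
    have hny := ht_nonneg F hy
    by_cases hcase : 1 ≤ htF F x
    · have := ihx hcase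
      have heq : x + y + (v, (0 : ℤ)) = (x + (v, (0 : ℤ))) + y := by
        rw [add_right_comm]
      rw [heq]
      exact AddSubmonoid.add_mem _ this hy
    · have hy1 : 1 ≤ htF F y := by omega
      have := ihy hy1
      rw [add_assoc]
      exact AddSubmonoid.add_mem _ hx this

lemma htF_v {P : LatticePolytope n} {v : Fin n → ℤ} {F : P.Facet}
    (hgen : P.AffGen) (hv : P.IsBaseFacet v F) :
    htF F ((v, (0 : ℤ)) : (Fin n → ℤ) × ℤ) = -1 := by
  simp [htF, form_v_eq hgen hv]

lemma htF_shift {P : LatticePolytope n} {v : Fin n → ℤ} {F : P.Facet}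
    (hgen : P.AffGen) (hv : P.IsBaseFacet v F) (z : (Fin n → ℤ) × ℤ) (k : ℕ) :
    htF F (z + k • ((v, (0 : ℤ)) : (Fin n → ℤ) × ℤ)) = htF F z - k := by
  induction k with
  | zero => simp
  | succ k ih =>
    have : z + (k + 1) • ((v, (0 : ℤ)) : (Fin n → ℤ) × ℤ) =
        (z + k • ((v, (0 : ℤ)) : (Fin n → ℤ) × ℤ)) + (v, (0 : ℤ)) := by
      rw [succ_nsmul, add_assoc]
    rw [this, htF_add, ih, htF_v hgen hv]
    push_cast
    ring

lemma shift_mem {P : LatticePolytope n} {v : Fin n → ℤ} {F : P.Facet}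
    (hgen : P.AffGen) (hv : P.IsBaseFacet v F) {z : (Fin n → ℤ) × ℤ}
    (hz : z ∈ P.SP) (k : ℕ) (hk : (k : ℤ) ≤ htF F z) :
    z + k • ((v, (0 : ℤ)) : (Fin n → ℤ) × ℤ) ∈ P.SP := by
  induction k with
  | zero => simpa using hz
  | succ k ih =>
    have hk' : (k : ℤ) ≤ htF F z := by push_cast at hk ⊢; omega
    have hmem := ih hk'
    have hht : 1 ≤ htF F (z + k • ((v, (0 : ℤ)) : (Fin n → ℤ) × ℤ)) := by
      rw [htF_shift hgen hv]
      push_cast at hk ⊢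
      omega
    have : z + (k + 1) • ((v, (0 : ℤ)) : (Fin n → ℤ) × ℤ) =
        (z + k • ((v, (0 : ℤ)) : (Fin n → ℤ) × ℤ)) + (v, (0 : ℤ)) := by
      rw [succ_nsmul, add_assoc]
    rw [this]
    exact add_v_mem hv hmem hht

lemma single_mem_polyAlg (R : Type) [CommRing R] {P : LatticePolytope n}
    {z : (Fin n → ℤ) × ℤ} (hz : z ∈ P.SP) :
    AddMonoidAlgebra.single z (1 : R) ∈ polyAlg R P := by
  induction hz using AddSubmonoid.closure_induction with
  | mem x hx =>
    obtain ⟨y, hy, rfl⟩ := hx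
    exact Algebra.subset_adjoin ⟨y, hy, rfl⟩
  | zero =>
    rw [← AddMonoidAlgebra.one_def]
    exact Subalgebra.one_mem _
  | add x y _ _ ihx ihy =>
    have : AddMonoidAlgebra.single (x + y) (1 : R) =
        AddMonoidAlgebra.single x (1 : R) * AddMonoidAlgebra.single y (1 : R) := by
      rw [AddMonoidAlgebra.single_mul_single, one_mul]
    rw [this]
    exact Subalgebra.mul_mem _ ihx ihy

end Statement5Aux
namespace Statement5Aux

open LatticePolytope AddMonoidAlgebra Finset

variable {n : ℕ}

/-- height-toNat abbreviation -/
abbrev htN {P : LatticePolytope n} (F : P.Facet) (z : (Fin n → ℤ) × ℤ) : ℕ :=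
  (htF F z).toNat

lemma phiMap_eq (R : Type) [CommRing R] {P : LatticePolytope n} (v : Fin n → ℤ)
    (F : P.Facet) (lam : R) (z : (Fin n → ℤ) × ℤ) :
    phiMap R v F lam z = ∑ k ∈ Finset.range (htN F z + 1),
      AddMonoidAlgebra.single (z + k • ((v, (0 : ℤ)) : (Fin n → ℤ) × ℤ))
        (((htN F z).choose k : R) * lam ^ k) := by
  rw [phiMap, add_comm (1 : AddMonoidAlgebra R ((Fin n → ℤ) × ℤ)), add_pow, Finset.mul_sum]
  refine Finset.sum_congr rfl fun k hk => ?_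
  rw [one_pow, mul_one, AddMonoidAlgebra.single_pow, AddMonoidAlgebra.natCast_def,
    AddMonoidAlgebra.single_mul_single, AddMonoidAlgebra.single_mul_single]
  rw [add_zero, one_mul, mul_comm (lam ^ k)]

lemma phiMap_add (R : Type) [CommRing R] {P : LatticePolytope n} (v : Fin n → ℤ)
    (F : P.Facet) (lam : R) {z w : (Fin n → ℤ) × ℤ} (hz : z ∈ P.SP) (hw : w ∈ P.SP) :
    phiMap R v F lam (z + w) = phiMap R v F lam z * phiMap R v F lam w := by
  simp only [phiMap]
  rw [htF_add, Int.toNat_add (ht_nonneg F hz) (ht_nonneg F hw), pow_add]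
  have hs : AddMonoidAlgebra.single (z + w) (1 : R) =
      AddMonoidAlgebra.single z (1 : R) * AddMonoidAlgebra.single w (1 : R) := by
    rw [AddMonoidAlgebra.single_mul_single, one_mul]
  rw [hs]
  ring

lemma phiMap_zero (R : Type) [CommRing R] {P : LatticePolytope n} (v : Fin n → ℤ)
    (F : P.Facet) (lam : R) : phiMap R v F lam 0 = 1 := by
  rw [phiMap, htF_zero]
  simp [← AddMonoidAlgebra.one_def]

lemma phiMap_mem (R : Type) [CommRing R] {P : LatticePolytope n} {v : Fin n → ℤ}
    {F : P.Facet} (hgen : P.AffGen) (hv : P.IsBaseFacet v F) (lam : R)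
    {z : (Fin n → ℤ) × ℤ} (hz : z ∈ P.SP) :
    phiMap R v F lam z ∈ polyAlg R P := by
  rw [phiMap_eq]
  refine Subalgebra.sum_mem _ fun k hk => ?_
  have hk' : (k : ℤ) ≤ htF F z := by
    have h0 := ht_nonneg F hz
    have h1 := Finset.mem_range.1 hk
    simp only [htN] at h1
    omega
  have hmem := shift_mem hgen hv hz k hk'
  have : AddMonoidAlgebra.single (z + k • ((v, (0 : ℤ)) : (Fin n → ℤ) × ℤ))
      (((htN F z).choose k : R) * lam ^ k) =
      (((htN F z).choose k : R) * lam ^ k) •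
        AddMonoidAlgebra.single (z + k • ((v, (0 : ℤ)) : (Fin n → ℤ) × ℤ)) (1 : R) := by
    rw [AddMonoidAlgebra.smul_single', mul_one]
  rw [this]
  exact Subalgebra.smul_mem _ (single_mem_polyAlg R hmem) _

/-- The inclusion `R[S_P] → R[ℤ^{n+1}]`. -/
def iotaSP (R : Type) [CommRing R] (P : LatticePolytope n) :
    AddMonoidAlgebra R ↥P.SP →ₐ[R] AddMonoidAlgebra R ((Fin n → ℤ) × ℤ) :=
  AddMonoidAlgebra.mapDomainAlgHom R R (P.SP).subtype

lemma iotaSP_apply (R : Type) [CommRing R] (P : LatticePolytope n)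
    (a : AddMonoidAlgebra R ↥P.SP) :
    iotaSP R P a = AddMonoidAlgebra.mapDomain (Subtype.val) a := rfl

lemma iotaSP_single (R : Type) [CommRing R] (P : LatticePolytope n) (s : ↥P.SP) (r : R) :
    iotaSP R P (AddMonoidAlgebra.single s r) = AddMonoidAlgebra.single (↑s) r := by
  rw [iotaSP_apply]
  exact AddMonoidAlgebra.mapDomain_single

lemma iotaSP_injective (R : Type) [CommRing R] (P : LatticePolytope n) :
    Function.Injective (iotaSP R P) := by
  intro a b hab
  rw [iotaSP_apply, iotaSP_apply] at hab
  exact AddMonoidAlgebra.mapDomain_injective Subtype.val_injective hab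

lemma range_iotaSP (R : Type) [CommRing R] (P : LatticePolytope n) :
    (iotaSP R P).range = polyAlg R P := by
  apply le_antisymm
  · rintro _ ⟨a, rfl⟩
    show iotaSP R P a ∈ polyAlg R P
    induction a using AddMonoidAlgebra.induction with
    | zero => rw [map_zero]; exact Subalgebra.zero_mem _
    | single_add s r f hs hr ih =>
      rw [map_add]
      refine Subalgebra.add_mem _ ?_ ih
      rw [iotaSP_single]
      rw [show AddMonoidAlgebra.single (↑s) r = r • AddMonoidAlgebra.single (s : (Fin n → ℤ) × ℤ) (1 : R) by
        rw [AddMonoidAlgebra.smul_single', mul_one]]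
      exact Subalgebra.smul_mem _ (single_mem_polyAlg R s.2) _
  · rw [polyAlg]
    rw [Algebra.adjoin_le_iff]
    rintro _ ⟨x, hx, rfl⟩
    exact ⟨AddMonoidAlgebra.single (⟨(x, 1), gen_mem_SP hx⟩ : ↥P.SP) 1, iotaSP_single R P _ 1⟩

/-- The iso `R[S_P] ≃ R[P]`. -/
def JJ (R : Type) [CommRing R] (P : LatticePolytope n) :
    AddMonoidAlgebra R ↥P.SP ≃ₐ[R] ↥(polyAlg R P) :=
  (AlgEquiv.ofInjective (iotaSP R P) (iotaSP_injective R P)).trans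
    (Subalgebra.equivOfEq _ _ (range_iotaSP R P))

lemma JJ_coe (R : Type) [CommRing R] (P : LatticePolytope n) (a : AddMonoidAlgebra R ↥P.SP) :
    ((JJ R P a : ↥(polyAlg R P)) : AddMonoidAlgebra R ((Fin n → ℤ) × ℤ)) = iotaSP R P a := rfl

end Statement5Aux
namespace Statement5Aux

open LatticePolytope AddMonoidAlgebra Finset

variable {n : ℕ} {P : LatticePolytope n} {v : Fin n → ℤ} {F : P.Facet}

/-- The internal version of `phiMap`, valued in `R[S_P]`. -/
def phiMapS (R : Type) [CommRing R] (hgen : P.AffGen) (hv : P.IsBaseFacet v F)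
    (lam : R) (s : ↥P.SP) : AddMonoidAlgebra R ↥P.SP :=
  ∑ k ∈ (Finset.range (htN F s.1 + 1)).attach,
    AddMonoidAlgebra.single
      (⟨s.1 + k.1 • ((v, (0 : ℤ)) : (Fin n → ℤ) × ℤ),
        shift_mem hgen hv s.2 k.1 (by
          have h0 := ht_nonneg F s.2
          have h1 := Finset.mem_range.1 k.2
          simp only [htN] at h1
          omega)⟩ : ↥P.SP)
      (((htN F s.1).choose k.1 : R) * lam ^ k.1)

lemma iota_phiMapS (R : Type) [CommRing R] (hgen : P.AffGen) (hv : P.IsBaseFacet v F)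
    (lam : R) (s : ↥P.SP) :
    iotaSP R P (phiMapS R hgen hv lam s) = phiMap R v F lam ↑s := by
  rw [phiMapS, map_sum, phiMap_eq]
  rw [← Finset.sum_attach (Finset.range (htN F (↑s : (Fin n → ℤ) × ℤ) + 1))
    (fun k => AddMonoidAlgebra.single
      ((↑s : (Fin n → ℤ) × ℤ) + k • ((v, (0 : ℤ)) : (Fin n → ℤ) × ℤ))
      (((htN F (↑s : (Fin n → ℤ) × ℤ)).choose k : R) * lam ^ k))]
  refine Finset.sum_congr rfl fun k _ => ?_
  rw [iotaSP_single]

lemma phiMapS_add (R : Type) [CommRing R] (hgen : P.AffGen) (hv : P.IsBaseFacet v F)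
    (lam : R) (s t : ↥P.SP) :
    phiMapS R hgen hv lam (s + t) = phiMapS R hgen hv lam s * phiMapS R hgen hv lam t := by
  apply iotaSP_injective
  rw [map_mul, iota_phiMapS, iota_phiMapS, iota_phiMapS, AddSubmonoid.coe_add]
  exact phiMap_add R v F lam s.2 t.2

lemma phiMapS_zero (R : Type) [CommRing R] (hgen : P.AffGen) (hv : P.IsBaseFacet v F)
    (lam : R) : phiMapS R hgen hv lam 0 = 1 := by
  apply iotaSP_injective
  rw [iota_phiMapS, map_one, ZeroMemClass.coe_zero, phiMap_zero]

/-- `phiMapS` as a multiplicative monoid hom. -/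
def psiMul (R : Type) [CommRing R] (hgen : P.AffGen) (hv : P.IsBaseFacet v F)
    (lam : R) : Multiplicative ↥P.SP →* AddMonoidAlgebra R ↥P.SP where
  toFun s := phiMapS R hgen hv lam (Multiplicative.toAdd s)
  map_one' := phiMapS_zero R hgen hv lam
  map_mul' s t := phiMapS_add R hgen hv lam (Multiplicative.toAdd s) (Multiplicative.toAdd t)

/-- The algebra endomorphism of `R[S_P]` induced by `phiMapS`. -/
def Psi (R : Type) [CommRing R] (hgen : P.AffGen) (hv : P.IsBaseFacet v F)
    (lam : R) : AddMonoidAlgebra R ↥P.SP →ₐ[R] AddMonoidAlgebra R ↥P.SP :=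
  AddMonoidAlgebra.lift R _ ↥P.SP (psiMul R hgen hv lam)

lemma Psi_single (R : Type) [CommRing R] (hgen : P.AffGen) (hv : P.IsBaseFacet v F)
    (lam : R) (s : ↥P.SP) :
    Psi R hgen hv lam (AddMonoidAlgebra.single s 1) = phiMapS R hgen hv lam s := by
  rw [Psi, AddMonoidAlgebra.lift_single, one_smul]
  rfl

lemma Psi_single_c (R : Type) [CommRing R] (hgen : P.AffGen) (hv : P.IsBaseFacet v F)
    (lam : R) (s : ↥P.SP) (c : R) :
    iotaSP R P (Psi R hgen hv lam (AddMonoidAlgebra.single s c)) =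
      c • phiMap R v F lam ↑s := by
  have h : (AddMonoidAlgebra.single s c : AddMonoidAlgebra R ↥P.SP) =
      c • AddMonoidAlgebra.single s (1 : R) := by
    rw [AddMonoidAlgebra.smul_single', mul_one]
  rw [h, map_smul, map_smul, Psi_single, iota_phiMapS]

lemma key_binomial (R : Type) [CommRing R] (hgen : P.AffGen) (hv : P.IsBaseFacet v F)
    (lam mu : R) {z : (Fin n → ℤ) × ℤ} (hz : z ∈ P.SP) :
    ∑ k ∈ Finset.range (htN F z + 1),
        (((htN F z).choose k : R) * mu ^ k) •
          phiMap R v F lam (z + k • ((v, (0 : ℤ)) : (Fin n → ℤ) × ℤ)) =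
      phiMap R v F (lam + mu) z := by
  set m := htN F z with hm
  set Q : AddMonoidAlgebra R ((Fin n → ℤ) × ℤ) :=
    1 + AddMonoidAlgebra.single ((v, (0 : ℤ)) : (Fin n → ℤ) × ℤ) lam with hQ
  have hstep : ∀ k ∈ Finset.range (m + 1),
      ((m.choose k : R) * mu ^ k) •
          phiMap R v F lam (z + k • ((v, (0 : ℤ)) : (Fin n → ℤ) × ℤ)) =
        AddMonoidAlgebra.single z (1 : R) *
          ((AddMonoidAlgebra.single ((v, (0 : ℤ)) : (Fin n → ℤ) × ℤ) mu) ^ k *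
            Q ^ (m - k) * ((m.choose k : ℕ) : AddMonoidAlgebra R ((Fin n → ℤ) × ℤ))) := by
    intro k hk
    have hkm : k ≤ m := by
      have := Finset.mem_range.1 hk
      omega
    have hm' : m = (htF F z).toNat := hm
    have hht : (htF F (z + k • ((v, (0 : ℤ)) : (Fin n → ℤ) × ℤ))).toNat = m - k := by
      have h0 := ht_nonneg F hz
      rw [htF_shift hgen hv]
      omega
    rw [phiMap, hht, ← hQ]
    rw [← smul_mul_assoc, AddMonoidAlgebra.smul_single', mul_one]
    rw [AddMonoidAlgebra.single_pow, AddMonoidAlgebra.natCast_def]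
    rw [show AddMonoidAlgebra.single z (1 : R) *
        (AddMonoidAlgebra.single (k • ((v, (0 : ℤ)) : (Fin n → ℤ) × ℤ)) (mu ^ k) *
          Q ^ (m - k) *
          AddMonoidAlgebra.single (0 : (Fin n → ℤ) × ℤ) ((m.choose k : R))) =
        (AddMonoidAlgebra.single z (1 : R) *
          AddMonoidAlgebra.single (k • ((v, (0 : ℤ)) : (Fin n → ℤ) × ℤ)) (mu ^ k) *
          AddMonoidAlgebra.single (0 : (Fin n → ℤ) × ℤ) ((m.choose k : R))) * Q ^ (m - k)
      from by ring]
    rw [AddMonoidAlgebra.single_mul_single, AddMonoidAlgebra.single_mul_single, add_zero,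
      one_mul, mul_comm (mu ^ k)]
  rw [Finset.sum_congr rfl hstep, ← Finset.mul_sum, ← add_pow, phiMap]
  have hm' : (htF F z).toNat = m := hm.symm
  rw [hm']
  congr 2
  rw [hQ]
  have hsa : AddMonoidAlgebra.single ((v, (0 : ℤ)) : (Fin n → ℤ) × ℤ) (lam + mu) =
      AddMonoidAlgebra.single ((v, (0 : ℤ)) : (Fin n → ℤ) × ℤ) lam +
        AddMonoidAlgebra.single ((v, (0 : ℤ)) : (Fin n → ℤ) × ℤ) mu :=
    AddMonoidAlgebra.single_add _ _ _
  rw [hsa]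
  abel

lemma Psi_comp (R : Type) [CommRing R] (hgen : P.AffGen) (hv : P.IsBaseFacet v F)
    (lam mu : R) :
    (Psi R hgen hv lam).comp (Psi R hgen hv mu) = Psi R hgen hv (lam + mu) := by
  refine AddMonoidAlgebra.algHom_ext ?_ (Subsingleton.elim _ _)
  intro s
  apply iotaSP_injective
  rw [AlgHom.comp_apply, Psi_single, Psi_single_c, one_smul, phiMapS, map_sum, map_sum]
  rw [Finset.sum_congr rfl (fun k _ => Psi_single_c R hgen hv lam _ _)]
  rw [Finset.sum_attach (Finset.range (htN F (s : (Fin n → ℤ) × ℤ) + 1))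
    (fun k => (((htN F (s : (Fin n → ℤ) × ℤ)).choose k : R) * mu ^ k) •
      phiMap R v F lam ((s : (Fin n → ℤ) × ℤ) + k • ((v, (0 : ℤ)) : (Fin n → ℤ) × ℤ)))]
  exact key_binomial R hgen hv lam mu s.2

lemma Psi_zero (R : Type) [CommRing R] (hgen : P.AffGen) (hv : P.IsBaseFacet v F) :
    Psi R hgen hv (0 : R) = AlgHom.id R _ := by
  refine AddMonoidAlgebra.algHom_ext ?_ (Subsingleton.elim _ _)
  intro s
  apply iotaSP_injective
  rw [Psi_single, iota_phiMapS, AlgHom.id_apply, iotaSP_single, phiMap]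
  simp

end Statement5Aux
namespace Statement5Aux

open LatticePolytope AddMonoidAlgebra Finset

variable {n : ℕ} {P : LatticePolytope n} {v : Fin n → ℤ} {F : P.Facet}

lemma JJ_symm_single (R : Type) [CommRing R] {z : (Fin n → ℤ) × ℤ} (hzS : z ∈ P.SP)
    (hz : AddMonoidAlgebra.single z (1 : R) ∈ polyAlg R P) :
    (JJ R P).symm ⟨AddMonoidAlgebra.single z 1, hz⟩ =
      AddMonoidAlgebra.single (⟨z, hzS⟩ : ↥P.SP) 1 := by
  apply (JJ R P).injective
  rw [AlgEquiv.apply_symm_apply]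
  apply Subtype.ext
  rw [JJ_coe, iotaSP_single]

/-- The elementary automorphism. -/
def EE (R : Type) [CommRing R] (hgen : P.AffGen) (hv : P.IsBaseFacet v F) (lam : R) :
    ↥(polyAlg R P) →ₐ[R] ↥(polyAlg R P) :=
  ((JJ R P).toAlgHom.comp (Psi R hgen hv lam)).comp (JJ R P).symm.toAlgHom

lemma EE_apply (R : Type) [CommRing R] (hgen : P.AffGen) (hv : P.IsBaseFacet v F)
    (lam : R) (x : ↥(polyAlg R P)) :
    EE R hgen hv lam x = JJ R P (Psi R hgen hv lam ((JJ R P).symm x)) := rfl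

lemma EE_comp (R : Type) [CommRing R] (hgen : P.AffGen) (hv : P.IsBaseFacet v F)
    (lam mu : R) :
    (EE R hgen hv lam).comp (EE R hgen hv mu) = EE R hgen hv (lam + mu) := by
  apply AlgHom.ext
  intro x
  rw [AlgHom.comp_apply, EE_apply, EE_apply, EE_apply, AlgEquiv.symm_apply_apply]
  congr 1
  exact DFunLike.congr_fun (Psi_comp R hgen hv lam mu) ((JJ R P).symm x)

lemma EE_zero (R : Type) [CommRing R] (hgen : P.AffGen) (hv : P.IsBaseFacet v F) :
    EE R hgen hv (0 : R) = AlgHom.id R _ := by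
  apply AlgHom.ext
  intro x
  rw [EE_apply, Psi_zero, AlgHom.id_apply, AlgHom.id_apply, AlgEquiv.apply_symm_apply]

/-- The degree-`d` part of the group algebra, as a submodule. -/
def Wdeg (R : Type) [CommRing R] (n : ℕ) (d : ℤ) :
    Submodule R (AddMonoidAlgebra R ((Fin n → ℤ) × ℤ)) where
  carrier := {a | ∀ s ∈ a.coeff.support, s.2 = d}
  add_mem' := by
    classical
    intro a b ha hb s hs
    rcases Finset.mem_union.1 (Finsupp.support_add hs) with h | h
    · exact ha s h
    · exact hb s h
  zero_mem' := by intro s hs; simp at hs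
  smul_mem' := fun c a ha s hs => ha s (Finsupp.support_smul hs)

lemma mem_Wdeg {R : Type} [CommRing R] {d : ℤ} {a : AddMonoidAlgebra R ((Fin n → ℤ) × ℤ)} :
    a ∈ Wdeg R n d ↔ ∀ s ∈ a.coeff.support, s.2 = d := Iff.rfl

lemma Wdeg_mul {R : Type} [CommRing R] {d e : ℤ}
    {a b : AddMonoidAlgebra R ((Fin n → ℤ) × ℤ)}
    (ha : a ∈ Wdeg R n d) (hb : b ∈ Wdeg R n e) : a * b ∈ Wdeg R n (d + e) := by
  classical
  intro s hs
  obtain ⟨t, ht, u, hu, rfl⟩ := Finset.mem_add.1 (AddMonoidAlgebra.support_coeff_mul_subset a b hs)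
  rw [Prod.snd_add, ha t ht, hb u hu]

lemma single_mem_Wdeg {R : Type} [CommRing R] (z : (Fin n → ℤ) × ℤ) (r : R) :
    AddMonoidAlgebra.single z r ∈ Wdeg R n z.2 := by
  intro s hs
  have := Finsupp.support_single_subset hs
  rw [Finset.mem_singleton] at this
  rw [this]

lemma Q_pow_mem_Wdeg {R : Type} [CommRing R] (lam : R) (m : ℕ) :
    (1 + AddMonoidAlgebra.single ((v, (0 : ℤ)) : (Fin n → ℤ) × ℤ) lam) ^ m ∈
      Wdeg R n 0 := by
  induction m with
  | zero =>
    rw [pow_zero, AddMonoidAlgebra.one_def]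
    exact single_mem_Wdeg (0 : (Fin n → ℤ) × ℤ) 1
  | succ m ih =>
    rw [pow_succ]
    have h1 : (1 + AddMonoidAlgebra.single ((v, (0 : ℤ)) : (Fin n → ℤ) × ℤ) lam) ∈
        Wdeg R n 0 := by
      refine Submodule.add_mem _ ?_ ?_
      · rw [AddMonoidAlgebra.one_def]
        exact single_mem_Wdeg (0 : (Fin n → ℤ) × ℤ) 1
      · exact single_mem_Wdeg ((v, (0 : ℤ)) : (Fin n → ℤ) × ℤ) lam
    have := Wdeg_mul ih h1
    simpa using this

lemma phiMap_mem_Wdeg {R : Type} [CommRing R] (lam : R) (z : (Fin n → ℤ) × ℤ) :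
    phiMap R v F lam z ∈ Wdeg R n z.2 := by
  rw [phiMap]
  have := Wdeg_mul (single_mem_Wdeg (R := R) z 1) (Q_pow_mem_Wdeg (v := v) lam ((htF F z).toNat))
  simpa using this

lemma EE_graded (R : Type) [CommRing R] (hgen : P.AffGen) (hv : P.IsBaseFacet v F)
    (lam : R) : IsGradedEndo R (EE R hgen hv lam) := by
  intro a d hd
  classical
  set b := (JJ R P).symm a with hb
  have ha : (a : AddMonoidAlgebra R ((Fin n → ℤ) × ℤ)) = iotaSP R P b := by
    conv_lhs => rw [← (JJ R P).apply_symm_apply a]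
    exact JJ_coe R P ((JJ R P).symm a)
  have hsupp : ∀ s : ↥P.SP, s ∈ b.coeff.support → ((s : (Fin n → ℤ) × ℤ)).2 = (d : ℤ) := by
    intro s hs
    apply hd
    rw [ha, iotaSP_apply]
    show (s : (Fin n → ℤ) × ℤ) ∈ (Finsupp.mapDomain Subtype.val b.coeff).support
    rw [Finsupp.mapDomain_support_of_injective Subtype.val_injective]
    exact Finset.mem_image_of_mem _ hs
  have hcoe : ((EE R hgen hv lam a : ↥(polyAlg R P)) : AddMonoidAlgebra R ((Fin n → ℤ) × ℤ)) =
      iotaSP R P (Psi R hgen hv lam b) := by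
    rw [EE_apply, JJ_coe]
  intro s hs
  rw [hcoe] at hs
  revert s hs
  show iotaSP R P (Psi R hgen hv lam b) ∈ Wdeg R n (d : ℤ)
  have hrw : iotaSP R P (Psi R hgen hv lam b) =
      iotaSP R P (Psi R hgen hv lam (b.coeff.sum AddMonoidAlgebra.single)) := by
    rw [AddMonoidAlgebra.sum_coeff_single]
  rw [hrw, map_finsuppSum, map_finsuppSum]
  refine Submodule.sum_mem _ fun s hs => ?_
  show iotaSP R P (Psi R hgen hv lam (AddMonoidAlgebra.single s (b.coeff s))) ∈ Wdeg R n (d : ℤ)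
  rw [Psi_single_c]
  exact Submodule.smul_mem _ _ (hsupp s hs ▸ phiMap_mem_Wdeg lam _)

end Statement5Aux
/-- The map `z ↦ z(1+λv)^{ht_v z}` is multiplicative on `S_P` with values in
`R[P]`, and induces the family of graded elementary automorphisms `e_v^λ`
with `e_v^λ ∘ e_v^μ = e_v^{λ+μ}`, `e_v^0 = id`, and `(e_v^λ)⁻¹ = e_v^{-λ}`. -/
theorem statement5 {n : ℕ} (P : LatticePolytope n) (hfd : P.IsFullDim)
    (hgen : P.AffGen) (R : Type) [CommRing R] (v : Fin n → ℤ) (F : P.Facet)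
    (hv : P.IsBaseFacet v F) :
    (∀ lam : R,
      (∀ z w : (Fin n → ℤ) × ℤ, z ∈ P.SP → w ∈ P.SP →
        phiMap R v F lam (z + w) = phiMap R v F lam z * phiMap R v F lam w) ∧
      phiMap R v F lam 0 = 1 ∧
      (∀ z ∈ P.SP, phiMap R v F lam z ∈ polyAlg R P)) ∧
    ∃ E : R → (polyAlg R P →ₐ[R] polyAlg R P),
      (∀ lam : R, ElemAutProp R v F lam (E lam)) ∧
      (∀ lam : R, IsGradedEndo R (E lam)) ∧
      (∀ lam mu : R, (E lam).comp (E mu) = E (lam + mu)) ∧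
      E 0 = AlgHom.id R (polyAlg R P) ∧
      (∀ lam : R, (E lam).comp (E (-lam)) = AlgHom.id R (polyAlg R P) ∧
        Function.Bijective (E lam)) := by
  classical
  refine ⟨fun lam => ⟨fun z w hz hw => Statement5Aux.phiMap_add R v F lam hz hw,
    Statement5Aux.phiMap_zero R v F lam,
    fun z hz => Statement5Aux.phiMap_mem R hgen hv lam hz⟩, ?_⟩
  refine ⟨fun lam => Statement5Aux.EE R hgen hv lam, ?_, ?_, ?_, ?_, ?_⟩
  · intro lam z hzS hz
    rw [Statement5Aux.EE_apply, Statement5Aux.JJ_symm_single R hzS hz,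
      Statement5Aux.JJ_coe, Statement5Aux.Psi_single, Statement5Aux.iota_phiMapS]
  · exact fun lam => Statement5Aux.EE_graded R hgen hv lam
  · exact fun lam mu => Statement5Aux.EE_comp R hgen hv lam mu
  · exact Statement5Aux.EE_zero R hgen hv
  · intro lam
    have h1 : (Statement5Aux.EE R hgen hv lam).comp (Statement5Aux.EE R hgen hv (-lam)) =
        AlgHom.id R (polyAlg R P) := by
      rw [Statement5Aux.EE_comp, add_neg_cancel, Statement5Aux.EE_zero]
    have h2 : (Statement5Aux.EE R hgen hv (-lam)).comp (Statement5Aux.EE R hgen hv lam) =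
        AlgHom.id R (polyAlg R P) := by
      rw [Statement5Aux.EE_comp, neg_add_cancel, Statement5Aux.EE_zero]
    refine ⟨h1, Function.bijective_iff_has_inverse.2
      ⟨Statement5Aux.EE R hgen hv (-lam), fun x => ?_, fun x => ?_⟩⟩
    · have := AlgHom.congr_fun h2 x
      rwa [AlgHom.comp_apply, AlgHom.id_apply] at this
    · have := AlgHom.congr_fun h1 x
      rwa [AlgHom.comp_apply, AlgHom.id_apply] at this
end
end

section
/- Let R be a commutative ring and P a balanced full-dimensional lattice polytope whose lattice points affinely generate ℤ^n. Let u, v ∈ Col(P) with u + v ≠ 0 and λ, μ ∈ R. Then, as graded R-algebra automorphisms of R[P]: if the product uv exists, e_u^λ ∘ e_v^μ ∘ e_u^{−λ} ∘ e_v^{−μ} = e_{uv}^{−λμ}; and if u + v ∉ Col(P), then e_u^λ and e_v^μ commute. -/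
open Set

noncomputable section

/-! ### Auxiliary development for the Steinberg relations -/

set_option maxHeartbeats 1600000
set_option synthInstance.maxHeartbeats 1000000

section BGAux

open LatticePolytope Finset AddMonoidAlgebra

variable {n : ℕ} {P : LatticePolytope n}

/-- `formR` agrees with the form on lattice points. -/
lemma formR_toR (φ : (Fin n → ℤ) →+ ℤ) (z : Fin n → ℤ) :
    formR φ (toR z) = (φ z : ℝ) := by
  unfold LatticePolytope.formR toR
  conv_rhs => rw [← Finset.univ_sum_single z, map_sum]
  push_cast
  refine Finset.sum_congr rfl fun i _ => ?_
  have h : Pi.single i (z i) = z i • (Pi.single i (1 : ℤ) : Fin n → ℤ) := by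
    funext j
    by_cases hj : j = i <;> simp [Pi.single_apply, hj]
  rw [h, map_zsmul]
  push_cast [smul_eq_mul]
  ring

/-- The linear extension of an integral form. -/
def formL (φ : (Fin n → ℤ) →+ ℤ) : (Fin n → ℝ) →ₗ[ℝ] ℝ where
  toFun := formR φ
  map_add' x y := by
    unfold LatticePolytope.formR
    rw [← Finset.sum_add_distrib]
    refine Finset.sum_congr rfl fun i _ => ?_
    simp [add_mul]
  map_smul' c x := by
    unfold LatticePolytope.formR
    simp only [RingHom.id_apply, smul_eq_mul, Finset.mul_sum]
    refine Finset.sum_congr rfl fun i _ => ?_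
    simp [mul_assoc]

@[simp] lemma formL_apply (φ : (Fin n → ℤ) →+ ℤ) (x : Fin n → ℝ) :
    formL φ x = formR φ x := rfl

lemma mem_lattice_of_verts {z : Fin n → ℤ} (hz : z ∈ P.verts) :
    z ∈ P.latticePoints := by
  show toR z ∈ P.carrier
  apply subset_convexHull
  exact Finset.mem_coe.2 (Finset.mem_image_of_mem toR hz)

lemma lattice_nonempty (P : LatticePolytope n) : ∃ z, z ∈ P.latticePoints :=
  ⟨P.nonem.choose, mem_lattice_of_verts P.nonem.choose_spec⟩

lemma form_ge (F : P.Facet) {z : Fin n → ℤ} (hz : z ∈ P.latticePoints) :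
    F.b ≤ F.form z := by
  have h := F.min_le (toR z) hz
  rw [formR_toR] at h
  exact_mod_cast h

lemma mem_set_iff (F : P.Facet) {z : Fin n → ℤ} (hz : z ∈ P.latticePoints) :
    toR z ∈ F.set ↔ F.form z = F.b := by
  unfold Facet.set
  constructor
  · rintro ⟨-, h⟩
    rw [formR_toR] at h
    exact_mod_cast h
  · intro h
    exact ⟨hz, by rw [formR_toR, h]⟩

lemma col_step {v : Fin n → ℤ} {F : P.Facet} (hv : P.IsBaseFacet v F)
    {z : Fin n → ℤ} (hz : z ∈ P.latticePoints) (h1 : F.form z ≠ F.b) :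
    z + v ∈ P.latticePoints :=
  hv.2 z hz (fun hmem => h1 ((mem_set_iff F hz).1 hmem))

lemma coord_bound (P : LatticePolytope n) (i : Fin n) :
    ∃ C : ℝ, ∀ z ∈ P.latticePoints, |(z i : ℝ)| ≤ C := by
  have hb : Bornology.IsBounded P.carrier := by
    rw [LatticePolytope.carrier, isBounded_convexHull]
    exact (P.verts.image toR).finite_toSet.isBounded
  obtain ⟨C, hC⟩ := (isBounded_iff_forall_norm_le).1 hb
  refine ⟨C, fun z hz => ?_⟩
  calc |(z i : ℝ)| = ‖toR z i‖ := rfl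
    _ ≤ ‖toR z‖ := norm_le_pi_norm (toR z) i
    _ ≤ C := hC (toR z) hz

lemma exists_form_gt (hgen : P.AffGen) (F : P.Facet) :
    ∃ z ∈ P.latticePoints, F.b < F.form z := by
  by_contra hcon
  push_neg at hcon
  obtain ⟨z₀, hz₀⟩ := lattice_nonempty P
  have hall : ∀ z ∈ P.latticePoints, F.form z = F.b := fun z hz =>
    le_antisymm (hcon z hz) (form_ge F hz)
  have hker : AddSubgroup.closure {y | ∃ x ∈ P.latticePoints, y = x - z₀} ≤ F.form.ker := by
    rw [AddSubgroup.closure_le]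
    rintro y ⟨x, hx, rfl⟩
    show F.form (x - z₀) = 0
    rw [map_sub, hall x hx, hall z₀ hz₀, sub_self]
  rw [hgen z₀ hz₀] at hker
  obtain ⟨g, hg⟩ := F.surj 1
  have h0 : F.form g = 0 := hker (AddSubgroup.mem_top g)
  rw [hg] at h0
  exact one_ne_zero h0

/-- A base facet's form takes value `-1` on its column vector. -/
lemma form_base (hgen : P.AffGen) {v : Fin n → ℤ} {F : P.Facet}
    (hv : P.IsBaseFacet v F) : F.form v = -1 := by
  obtain ⟨z₁, hz₁, hz₁gt⟩ := exists_form_gt hgen F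
  have hneg : F.form v ≤ -1 := by
    by_contra hcon
    push_neg at hcon
    have h0 : 0 ≤ F.form v := by omega
    have chain : ∀ k : ℕ, (z₁ + k • v) ∈ P.latticePoints ∧ F.b < F.form (z₁ + k • v) := by
      intro k
      induction k with
      | zero => simpa using ⟨hz₁, hz₁gt⟩
      | succ k ih =>
        have hmem := col_step hv ih.1 (ne_of_gt ih.2)
        have heq : z₁ + (k+1) • v = (z₁ + k • v) + v := by
          rw [succ_nsmul, ← add_assoc]
        refine ⟨by rw [heq]; exact hmem, ?_⟩
        rw [heq, map_add]
        have := ih.2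
        omega
    obtain ⟨i, hi⟩ : ∃ i, v i ≠ 0 := by
      by_contra hvi; push_neg at hvi
      exact hv.1 (funext fun i => hvi i)
    obtain ⟨C, hC⟩ := coord_bound P i
    obtain ⟨k, hk⟩ : ∃ k : ℕ, C + |(z₁ i : ℝ)| < k := exists_nat_gt _
    have hmem := (chain k).1
    have hb := hC _ hmem
    have hcoordZ : (z₁ + k • v) i = z₁ i + (k : ℤ) * v i := by
      rw [Pi.add_apply, Pi.smul_apply, nsmul_eq_mul]
    have hcoord : ((z₁ + k • v) i : ℝ) = (z₁ i : ℝ) + (k : ℝ) * (v i : ℝ) := by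
      rw [hcoordZ]; push_cast; ring
    have hvi1 : (1 : ℝ) ≤ |(v i : ℝ)| := by
      have : (1 : ℤ) ≤ |v i| := Int.one_le_abs hi
      calc (1:ℝ) ≤ ((|v i| : ℤ) : ℝ) := by exact_mod_cast this
        _ = |(v i : ℝ)| := by push_cast; ring
    have habs : (k : ℝ) ≤ C + |(z₁ i : ℝ)| := by
      have h1 : |(k : ℝ) * (v i : ℝ)| ≤ |((z₁ + k • v) i : ℝ)| + |(z₁ i : ℝ)| := by
        rw [hcoord]
        have := abs_sub_abs_le_abs_sub ((z₁ i : ℝ) + (k : ℝ) * (v i : ℝ)) (z₁ i : ℝ)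
        have h2 := abs_add_le (z₁ i : ℝ) ((k : ℝ) * (v i : ℝ))
        calc |(k : ℝ) * (v i : ℝ)| = |((z₁ i : ℝ) + (k : ℝ) * (v i : ℝ)) - (z₁ i : ℝ)| := by ring_nf
          _ ≤ |(z₁ i : ℝ) + (k : ℝ) * (v i : ℝ)| + |(z₁ i : ℝ)| := abs_sub _ _
      have h3 : (k : ℝ) ≤ |(k : ℝ) * (v i : ℝ)| := by
        rw [abs_mul, abs_of_nonneg (by positivity : (0:ℝ) ≤ (k:ℝ))]
        nlinarith [hvi1, abs_nonneg ((v i : ℝ))]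
      nlinarith [hb, h1, h3]
    linarith
  set c := F.form v with hc
  have hdvd : ∀ N : ℕ, ∀ z ∈ P.latticePoints, F.form z - F.b = N → (-c) ∣ (F.form z - F.b) := by
    intro N
    induction N using Nat.strong_induction_on with
    | _ N ih =>
      intro z hz hN
      rcases Nat.eq_zero_or_pos N with h0 | hpos
      · rw [hN, h0]; exact dvd_zero _
      · have hne : F.form z ≠ F.b := by omega
        have hmem := col_step hv hz hne
        have hform : F.form (z + v) - F.b = (F.form z - F.b) + c := by
          rw [map_add]; ring
        have hge : 0 ≤ F.form (z+v) - F.b := by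
          have := form_ge F hmem; omega
        have hM : F.form (z+v) - F.b = ((F.form (z+v) - F.b).toNat : ℤ) :=
          (Int.toNat_of_nonneg hge).symm
        have hMN : (F.form (z+v) - F.b).toNat < N := by omega
        have hdd := ih _ hMN (z+v) hmem hM
        have heq2 : F.form z - F.b = (F.form (z+v) - F.b) + (-c) := by omega
        rw [heq2]
        exact dvd_add hdd ⟨1, by ring⟩
  have hdvd' : ∀ z ∈ P.latticePoints, (-c) ∣ (F.form z - F.b) := fun z hz =>
    hdvd (F.form z - F.b).toNat z hz
      (Int.toNat_of_nonneg (by have := form_ge F hz; omega)).symm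
  obtain ⟨z₀, hz₀⟩ := lattice_nonempty P
  have hH : AddSubgroup.closure {y | ∃ x ∈ P.latticePoints, y = x - z₀} ≤
      AddSubgroup.comap F.form (AddSubgroup.zmultiples (-c)) := by
    rw [AddSubgroup.closure_le]
    rintro y ⟨x, hx, rfl⟩
    show F.form (x - z₀) ∈ AddSubgroup.zmultiples (-c)
    rw [Int.mem_zmultiples_iff, map_sub]
    have h1 := hdvd' x hx
    have h2 := hdvd' z₀ hz₀
    have : F.form x - F.form z₀ = (F.form x - F.b) - (F.form z₀ - F.b) := by ring
    rw [this]
    exact dvd_sub h1 h2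
  rw [hgen z₀ hz₀] at hH
  obtain ⟨g, hg⟩ := F.surj 1
  have hmem := hH (AddSubgroup.mem_top g)
  rw [AddSubgroup.mem_comap, Int.mem_zmultiples_iff, hg] at hmem
  have h1 : -c ≤ 1 := Int.le_of_dvd one_pos hmem
  omega

lemma exists_ht_one (hgen : P.AffGen) {v : Fin n → ℤ} {F : P.Facet}
    (hv : P.IsBaseFacet v F) : ∃ z ∈ P.latticePoints, F.form z = F.b + 1 := by
  have hfv := form_base hgen hv
  obtain ⟨z₁, hz₁, hgt⟩ := exists_form_gt hgen F
  have key : ∀ N : ℕ, ∀ z ∈ P.latticePoints, F.form z - F.b = N → 0 < N →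
      ∃ z' ∈ P.latticePoints, F.form z' = F.b + 1 := by
    intro N
    induction N using Nat.strong_induction_on with
    | _ N ih =>
      intro z hz hN hpos
      rcases eq_or_lt_of_le (Nat.one_le_iff_ne_zero.2 (Nat.pos_iff_ne_zero.1 hpos)) with h1 | h1
      · exact ⟨z, hz, by omega⟩
      · have hne : F.form z ≠ F.b := by omega
        have hmem := col_step hv hz hne
        have hform : F.form (z + v) - F.b = (N : ℤ) - 1 := by
          rw [map_add, hfv]; omega
        have hN1 : F.form (z + v) - F.b = ((N - 1 : ℕ) : ℤ) := by
          rw [hform]; push_cast; omega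
        exact ih (N-1) (by omega) (z+v) hmem hN1 (by omega)
  exact key (F.form z₁ - F.b).toNat z₁ hz₁
    (Int.toNat_of_nonneg (by omega)).symm (by omega)

lemma facet_subset_hull (F : P.Facet) :
    F.set ⊆ convexHull ℝ (toR '' {z | z ∈ P.latticePoints ∧ F.form z = F.b}) := by
  classical
  rintro x ⟨hxc, hxf⟩
  have hxc' := hxc
  rw [LatticePolytope.carrier, Finset.convexHull_eq] at hxc'
  obtain ⟨w, hw0, hw1, hwx⟩ := hxc'
  have hcm : x = ∑ y ∈ P.verts.image toR, w y • y := by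
    rw [← hwx, Finset.centerMass_eq_of_sum_1 _ id hw1]
    rfl
  have hyc : ∀ y ∈ P.verts.image toR, y ∈ P.carrier := fun y hy =>
    subset_convexHull ℝ _ (Finset.mem_coe.2 hy)
  have hsum : ∑ y ∈ P.verts.image toR, w y * (formL F.form y - F.b) = 0 := by
    have hL : formL F.form x = ∑ y ∈ P.verts.image toR, w y * formL F.form y := by
      rw [hcm, map_sum]
      refine Finset.sum_congr rfl fun y _ => ?_
      rw [map_smul]; rfl
    have : ∑ y ∈ P.verts.image toR, w y * (formL F.form y - F.b)
        = (∑ y ∈ P.verts.image toR, w y * formL F.form y)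
          - (∑ y ∈ P.verts.image toR, w y) * (F.b : ℝ) := by
      rw [Finset.sum_mul, ← Finset.sum_sub_distrib]
      refine Finset.sum_congr rfl fun y _ => ?_
      ring
    rw [this, ← hL, hw1, one_mul]
    have : formL F.form x = (F.b : ℝ) := hxf
    rw [this]; ring
  have hterm : ∀ y ∈ P.verts.image toR, w y ≠ 0 → formL F.form y = (F.b : ℝ) := by
    intro y hy hwy
    have hnn : ∀ y ∈ P.verts.image toR, 0 ≤ w y * (formL F.form y - F.b) := by
      intro y' hy'
      have h1 := hw0 y' hy'
      have h2 : (F.b : ℝ) ≤ formL F.form y' := F.min_le y' (hyc y' hy')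
      have : 0 ≤ formL F.form y' - F.b := by linarith
      positivity
    have := (Finset.sum_eq_zero_iff_of_nonneg hnn).1 hsum y hy
    have h1 := hw0 y hy
    rcases mul_eq_zero.1 this with h | h
    · exact absurd h hwy
    · linarith [h]
  rw [show x = (Finset.filter (fun i => w i ≠ 0) (P.verts.image toR)).centerMass w id from by
    rw [Finset.centerMass_filter_ne_zero]; exact hwx.symm]
  apply Finset.centerMass_mem_convexHull
  · intro y hy
    exact hw0 y (Finset.mem_of_mem_filter y hy)
  · rw [Finset.sum_filter_ne_zero, hw1]
    norm_num
  · intro y hy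
    obtain ⟨hy1, hy2⟩ := Finset.mem_filter.1 hy
    obtain ⟨zy, hzy, rfl⟩ := Finset.mem_image.1 hy1
    have hform := hterm _ hy1 hy2
    rw [formL_apply, formR_toR] at hform
    exact ⟨zy, ⟨mem_lattice_of_verts hzy, by exact_mod_cast hform⟩, rfl⟩

/-- If all lattice points of facet `F` lie on facet `G`, the two support forms
are equal up to sign. -/
lemma facet_dep (F G : P.Facet)
    (h : ∀ z ∈ P.latticePoints, F.form z = F.b → G.form z = G.b) :
    (G.form = F.form ∧ G.b = F.b) ∨ (∀ z, G.form z = - F.form z) := by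
  classical
  have himg : toR '' {z | z ∈ P.latticePoints ∧ F.form z = F.b} ⊆
      {y | formL G.form y = (G.b : ℝ)} := by
    rintro _ ⟨z, ⟨hz, hzf⟩, rfl⟩
    show formL G.form (toR z) = (G.b : ℝ)
    rw [formL_apply, formR_toR]
    exact_mod_cast h z hz hzf
  have hGconst : ∀ x ∈ F.set, formL G.form x = (G.b : ℝ) := by
    intro x hx
    have hconv : Convex ℝ {y | formL G.form y = (G.b : ℝ)} :=
      convex_hyperplane (IsLinearMap.mk (formL G.form).map_add (formL G.form).map_smul) _
    exact convexHull_min himg hconv (facet_subset_hull F hx)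
  have hFconst : ∀ x ∈ F.set, formL F.form x = (F.b : ℝ) := fun x hx => hx.2
  have hle : ∀ (φ : (Fin n → ℤ) →+ ℤ) (r : ℝ), (∀ x ∈ F.set, formL φ x = r) →
      vectorSpan ℝ F.set ≤ LinearMap.ker (formL φ) := by
    intro φ r hφ
    rw [vectorSpan_def, Submodule.span_le]
    rintro y ⟨x1, hx1, x2, hx2, rfl⟩
    show formL φ (x1 -ᵥ x2) = 0
    rw [vsub_eq_sub, map_sub, hφ x1 hx1, hφ x2 hx2, sub_self]
  have hrank : ∀ (H : P.Facet), Module.finrank ℝ (LinearMap.ker (formL H.form)) + 1 = n := by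
    intro H
    obtain ⟨g, hg⟩ := H.surj 1
    have hsurj : Function.Surjective (formL H.form) := by
      intro r
      refine ⟨r • toR g, ?_⟩
      rw [map_smul, formL_apply, formR_toR, hg]
      simp
    have h1 := LinearMap.finrank_range_add_finrank_ker (formL H.form)
    rw [LinearMap.range_eq_top.2 hsurj, finrank_top, Module.finrank_self,
      Module.finrank_pi, Fintype.card_fin] at h1
    omega
  have hdim : Module.finrank ℝ (vectorSpan ℝ F.set) + 1 = n := F.dim
  have hspan : vectorSpan ℝ F.set = LinearMap.ker (formL F.form) := by
    apply Submodule.eq_of_le_of_finrank_le (hle F.form _ hFconst)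
    have := hrank F
    omega
  have hkk : LinearMap.ker (formL F.form) ≤ LinearMap.ker (formL G.form) := by
    rw [← hspan]; exact hle G.form _ hGconst
  obtain ⟨gF, hgF⟩ := F.surj 1
  have heF : formL F.form (toR gF) = 1 := by
    rw [formL_apply, formR_toR, hgF]; norm_num
  have hrel : ∀ x, formL G.form x = formL G.form (toR gF) * formL F.form x := by
    intro x
    have hxk : x - (formL F.form x) • toR gF ∈ LinearMap.ker (formL F.form) := by
      rw [LinearMap.mem_ker, map_sub, map_smul, heF]; simp
    have hGz := hkk hxk
    rw [LinearMap.mem_ker, map_sub, map_smul, smul_eq_mul] at hGz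
    linarith [hGz]
  have hrelZ : ∀ z : Fin n → ℤ, G.form z = G.form gF * F.form z := by
    intro z
    have h2 := hrel (toR z)
    rw [formL_apply, formR_toR, formL_apply, formR_toR, formL_apply, formR_toR] at h2
    exact_mod_cast h2
  obtain ⟨gG, hgG⟩ := G.surj 1
  have hunit : G.form gF * F.form gG = 1 := by rw [← hrelZ gG, hgG]
  have hcases : G.form gF = 1 ∨ G.form gF = -1 :=
    Int.isUnit_iff.1 (IsUnit.of_mul_eq_one _ hunit)
  rcases hcases with h1 | h1
  · left
    have hform : G.form = F.form := AddMonoidHom.ext fun z => by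
      rw [hrelZ z, h1, one_mul]
    refine ⟨hform, ?_⟩
    obtain ⟨xF, hxF, hxFe⟩ := F.attained
    obtain ⟨xG, hxG, hxGe⟩ := G.attained
    have hGF : LatticePolytope.formR G.form = LatticePolytope.formR F.form := by rw [hform]
    have h1' : (G.b : ℝ) ≤ (F.b : ℝ) := by
      have := G.min_le xF hxF
      rw [hGF, hxFe] at this
      exact this
    have h2' : (F.b : ℝ) ≤ (G.b : ℝ) := by
      have := F.min_le xG hxG
      rw [← hGF, hxGe] at this
      exact this
    have : (G.b : ℝ) = (F.b : ℝ) := le_antisymm h1' h2'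
    exact_mod_cast this
  · right
    intro z
    rw [hrelZ z, h1]
    ring

lemma base_facet_unique (hgen : P.AffGen) {w : Fin n → ℤ} {F G : P.Facet}
    (hF : P.IsBaseFacet w F) (hG : P.IsBaseFacet w G) :
    G.form = F.form ∧ G.b = F.b := by
  have hFw := form_base hgen hF
  have hGw := form_base hgen hG
  have h : ∀ z ∈ P.latticePoints, F.form z = F.b → G.form z = G.b := by
    intro z hz hzF
    by_contra hne
    have hmem := col_step hG hz hne
    have hge := form_ge F hmem
    rw [map_add, hzF, hFw] at hge
    omega
  rcases facet_dep F G h with h1 | h2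
  · exact h1
  · exfalso
    have h3 := h2 w
    rw [hGw, hFw] at h3
    omega

/-! #### `S_P` lemmas -/

lemma htF_add (F : P.Facet) (y z : (Fin n → ℤ) × ℤ) :
    htF F (y + z) = htF F y + htF F z := by
  unfold LatticePolytope.htF
  rw [Prod.fst_add, Prod.snd_add, map_add]
  ring

lemma htF_smul (F : P.Facet) (j : ℕ) (w : Fin n → ℤ) :
    htF F (j • ((w, 0) : (Fin n → ℤ) × ℤ)) = j * F.form w := by
  rw [show (j • ((w, (0:ℤ)) : (Fin n → ℤ) × ℤ)) = ((j • w, 0) : (Fin n → ℤ) × ℤ) by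
    rw [Prod.smul_mk, smul_zero]]
  show F.form (j • w) - 0 * F.b = _
  rw [map_nsmul, zero_mul, sub_zero, nsmul_eq_mul]

lemma sp_ht_nonneg (F : P.Facet) {z : (Fin n → ℤ) × ℤ} (hz : z ∈ P.SP) :
    0 ≤ htF F z := by
  induction hz using AddSubmonoid.closure_induction with
  | mem x hx =>
    obtain ⟨x₀, hx₀, rfl⟩ := hx
    have := form_ge F hx₀
    unfold LatticePolytope.htF
    simpa using this
  | zero => simp [LatticePolytope.htF]
  | add x y hx hy ihx ihy =>
    rw [htF_add]; omega

lemma sp_col_step {v : Fin n → ℤ} {F : P.Facet} (hv : P.IsBaseFacet v F)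
    {z : (Fin n → ℤ) × ℤ} (hz : z ∈ P.SP) (h1 : 1 ≤ htF F z) :
    z + ((v, 0) : (Fin n → ℤ) × ℤ) ∈ P.SP := by
  induction hz using AddSubmonoid.closure_induction with
  | mem x hx =>
    obtain ⟨x₀, hx₀, rfl⟩ := hx
    have hne : F.form x₀ ≠ F.b := by
      unfold LatticePolytope.htF at h1; simp at h1; omega
    exact AddSubmonoid.subset_closure ⟨x₀ + v, col_step hv hx₀ hne, by simp⟩
  | zero => simp [LatticePolytope.htF] at h1
  | add x y hx hy ihx ihy =>
    rw [htF_add] at h1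
    have h0x := sp_ht_nonneg F hx
    have h0y := sp_ht_nonneg F hy
    rcases le_or_gt 1 (htF F x) with h | h
    · have := ihx h
      have : (x + (v, 0)) + y ∈ P.SP := AddSubmonoid.add_mem _ this hy
      rwa [add_right_comm] at this
    · have hy1 : 1 ≤ htF F y := by omega
      have := ihy hy1
      have : x + (y + (v, 0)) ∈ P.SP := AddSubmonoid.add_mem _ hx this
      rwa [← add_assoc] at this

lemma sp_add_col_smul {w : Fin n → ℤ} {F : P.Facet} (hw : P.IsBaseFacet w F)
    (hfw : F.form w = -1) {z : (Fin n → ℤ) × ℤ} (hz : z ∈ P.SP) :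
    ∀ j : ℕ, (j : ℤ) ≤ htF F z → z + j • ((w, 0) : (Fin n → ℤ) × ℤ) ∈ P.SP := by
  intro j
  induction j with
  | zero => intro _; simpa using hz
  | succ j ih =>
    intro hj
    have hj' : (j : ℤ) ≤ htF F z := by push_cast at hj ⊢; omega
    have hmem := ih hj'
    have hht : htF F (z + j • ((w, 0) : (Fin n → ℤ) × ℤ)) = htF F z - j := by
      rw [htF_add, htF_smul, hfw]; ring
    have h1 : 1 ≤ htF F (z + j • ((w, 0) : (Fin n → ℤ) × ℤ)) := by
      rw [hht]; push_cast at hj; omega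
    have := sp_col_step hw hmem h1
    rwa [add_assoc, ← succ_nsmul] at this

lemma htF_add_smul (F : P.Facet) (z : (Fin n → ℤ) × ℤ) (j : ℕ) (w : Fin n → ℤ) :
    htF F (z + j • ((w, 0) : (Fin n → ℤ) × ℤ)) = htF F z + j * F.form w := by
  rw [htF_add, htF_smul]

/-! #### Polytopal algebra lemmas -/

section Alg

variable (R : Type) [CommRing R]

lemma single_mem_polyAlg {z : (Fin n → ℤ) × ℤ} (hz : z ∈ P.SP) :
    AddMonoidAlgebra.single z (1:R) ∈ polyAlg R P := by
  induction hz using AddSubmonoid.closure_induction with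
  | mem x hx =>
    obtain ⟨x₀, hx₀, rfl⟩ := hx
    exact Algebra.subset_adjoin ⟨x₀, hx₀, rfl⟩
  | zero =>
    rw [show (AddMonoidAlgebra.single (0 : (Fin n → ℤ) × ℤ) (1:R))
      = 1 from (AddMonoidAlgebra.one_def).symm]
    exact one_mem _
  | add x y hx hy ihx ihy =>
    rw [show (AddMonoidAlgebra.single (x+y) (1:R))
        = AddMonoidAlgebra.single x 1 * AddMonoidAlgebra.single y 1 by
      rw [AddMonoidAlgebra.single_mul_single, one_mul]]
    exact mul_mem ihx ihy

set_option synthInstance.maxHeartbeats 1000000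
set_option maxHeartbeats 1600000

open Classical in
/-- The monomial `[z]` as an element of the polytopal algebra (`0` off `S_P`). -/
def gs (P : LatticePolytope n) (z : (Fin n → ℤ) × ℤ) : polyAlg R P :=
  if h : z ∈ P.SP then ⟨AddMonoidAlgebra.single z 1, single_mem_polyAlg R h⟩ else 0

lemma gs_coe {z : (Fin n → ℤ) × ℤ} (hz : z ∈ P.SP) :
    ((gs R P z : polyAlg R P) : AddMonoidAlgebra R ((Fin n → ℤ) × ℤ))
      = AddMonoidAlgebra.single z 1 := by
  rw [gs, dif_pos hz]

lemma phiMap_eq (v : Fin n → ℤ) (F : P.Facet) (t : R) (z : (Fin n → ℤ) × ℤ) :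
    phiMap R v F t z = ∑ j ∈ Finset.range ((htF F z).toNat + 1),
      AddMonoidAlgebra.single (z + j • ((v, 0) : (Fin n → ℤ) × ℤ))
        (((htF F z).toNat.choose j : R) * t ^ j) := by
  unfold phiMap
  rw [add_comm (1 : AddMonoidAlgebra R ((Fin n → ℤ) × ℤ)) _, add_pow, Finset.mul_sum]
  refine Finset.sum_congr rfl fun j hj => ?_
  rw [AddMonoidAlgebra.single_pow, one_pow, mul_one, AddMonoidAlgebra.natCast_def,
    AddMonoidAlgebra.single_mul_single, AddMonoidAlgebra.single_mul_single, add_zero]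
  congr 1
  ring

lemma coe_apply_gs {w : Fin n → ℤ} {F : P.Facet} {t : R}
    {e : polyAlg R P ≃ₐ[R] polyAlg R P} (he : ElemAutProp R w F t e.toAlgHom)
    {z : (Fin n → ℤ) × ℤ} (hz : z ∈ P.SP) :
    ((e (gs R P z) : polyAlg R P) : AddMonoidAlgebra R ((Fin n → ℤ) × ℤ))
      = phiMap R w F t z := by
  have h1 : gs R P z = ⟨AddMonoidAlgebra.single z 1, single_mem_polyAlg R hz⟩ :=
    dif_pos hz
  rw [h1]
  exact he z hz _

lemma apply_gs {w : Fin n → ℤ} {F : P.Facet} (hw : P.IsBaseFacet w F)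
    (hfw : F.form w = -1) {t : R} {e : polyAlg R P ≃ₐ[R] polyAlg R P}
    (he : ElemAutProp R w F t e.toAlgHom) {z : (Fin n → ℤ) × ℤ} (hz : z ∈ P.SP)
    {h : ℕ} (hh : htF F z = (h : ℤ)) :
    e (gs R P z) = ∑ j ∈ Finset.range (h + 1),
      ((h.choose j : R) * t ^ j) • gs R P (z + j • ((w, 0) : (Fin n → ℤ) × ℤ)) := by
  have hmem : ∀ j ∈ Finset.range (h+1), z + j • ((w,0) : (Fin n → ℤ) × ℤ) ∈ P.SP := by
    intro j hj
    refine sp_add_col_smul hw hfw hz j ?_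
    rw [hh]
    exact_mod_cast Nat.lt_succ_iff.1 (Finset.mem_range.1 hj)
  apply Subtype.ext
  rw [coe_apply_gs R he hz, phiMap_eq, hh]
  simp only [Int.toNat_natCast]
  rw [AddSubmonoidClass.coe_finset_sum]
  refine Finset.sum_congr rfl fun j hj => ?_
  rw [Subalgebra.coe_smul, gs_coe R (hmem j hj), AddMonoidAlgebra.smul_single', mul_one]

/-! #### Binomial identities -/

lemma sum_choose_mul (A : Type) [CommRing A] (x y : A) (N : ℕ) :
    ∑ m ∈ Finset.range (N+1), (N.choose m : A) * x^m * y^(N-m) = (x+y)^N := by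
  rw [add_pow]
  exact Finset.sum_congr rfl fun m _ => by ring

lemma sum_choose_one (A : Type) [CommRing A] (x : A) (N : ℕ) :
    ∑ m ∈ Finset.range (N+1), (N.choose m : A) * x^m = (x+1)^N := by
  rw [← sum_choose_mul A x 1 N]
  exact Finset.sum_congr rfl fun m _ => by rw [one_pow, mul_one]

lemma core_id (A : Type) [CommRing A] (L M U V Z : A) (p q : ℕ) :
    ∑ j ∈ Finset.range (q+1), (q.choose j : A) * (-M)^j *
      (∑ k ∈ Finset.range (p+1), (p.choose k : A) * (-L)^k *
        (∑ l ∈ Finset.range (((q-j)+k)+1), (((q-j)+k).choose l : A) * M^l *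
          (Z * V^j * U^k * V^l * (1 + L*U)^(p-k))))
    = Z * (1 + -(L*M) * (U*V))^p := by
  set W : A := M*V + 1 with hW
  clear_value W
  have hstep1 : ∀ j k : ℕ,
      ∑ l ∈ Finset.range (((q-j)+k)+1), (((q-j)+k).choose l : A) * M^l *
          (Z * V^j * U^k * V^l * (1 + L*U)^(p-k))
      = Z * V^j * U^k * (1 + L*U)^(p-k) * W^((q-j)+k) := by
    intro j k
    calc ∑ l ∈ Finset.range (((q-j)+k)+1), (((q-j)+k).choose l : A) * M^l *
          (Z * V^j * U^k * V^l * (1 + L*U)^(p-k))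
        = ∑ l ∈ Finset.range (((q-j)+k)+1),
            (Z * V^j * U^k * (1 + L*U)^(p-k)) * ((((q-j)+k).choose l : A) * (M*V)^l) :=
          Finset.sum_congr rfl fun l _ => by ring
      _ = (Z * V^j * U^k * (1 + L*U)^(p-k)) *
            ∑ l ∈ Finset.range (((q-j)+k)+1), ((((q-j)+k).choose l : A) * (M*V)^l) := by
          rw [Finset.mul_sum]
      _ = _ := by rw [sum_choose_one, ← hW]
  calc ∑ j ∈ Finset.range (q+1), (q.choose j : A) * (-M)^j *
      (∑ k ∈ Finset.range (p+1), (p.choose k : A) * (-L)^k *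
        (∑ l ∈ Finset.range (((q-j)+k)+1), (((q-j)+k).choose l : A) * M^l *
          (Z * V^j * U^k * V^l * (1 + L*U)^(p-k))))
      = ∑ j ∈ Finset.range (q+1), (q.choose j : A) * (-M)^j *
        ((Z * V^j * W^(q-j)) *
          ∑ k ∈ Finset.range (p+1),
            ((p.choose k : A) * (-(L*U*W))^k * (1 + L*U)^(p-k))) := by
        refine Finset.sum_congr rfl fun j hj => ?_
        congr 1
        rw [Finset.mul_sum]
        refine Finset.sum_congr rfl fun k hk => ?_
        rw [hstep1 j k, pow_add]
        ring
    _ = ∑ j ∈ Finset.range (q+1),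
          (Z * (1 + -(L*M) * (U*V))^p) * ((q.choose j : A) * (-(M*V))^j * W^(q-j)) := by
        refine Finset.sum_congr rfl fun j hj => ?_
        rw [sum_choose_mul, show (-(L*U*W)) + (1 + L*U) = 1 + -(L*M) * (U*V) from by
          rw [hW]; ring]
        ring
    _ = (Z * (1 + -(L*M) * (U*V))^p) * ((-(M*V)) + W)^q := by
        rw [← Finset.mul_sum, sum_choose_mul]
    _ = Z * (1 + -(L*M) * (U*V))^p := by
        rw [show (-(M*V)) + W = 1 from by rw [hW]; ring, one_pow, mul_one]

lemma ring_id_prod (A : Type) [CommRing A] [Algebra R A] (lam mu : R) (U V Z : A)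
    (p q : ℕ) :
    ∑ j ∈ Finset.range (q+1), ((q.choose j : R) * (-mu)^j) •
      (∑ k ∈ Finset.range (p+1), ((p.choose k : R) * (-lam)^k) •
        (∑ l ∈ Finset.range (((q-j)+k)+1), ((((q-j)+k).choose l : R) * mu^l) •
          (Z * V^j * U^k * V^l * (1 + lam • U)^(p-k))))
    = Z * (1 + (-(lam*mu)) • (U*V))^p := by
  simp only [Algebra.smul_def, map_mul, map_pow, map_neg, map_natCast]
  exact core_id A (algebraMap R A lam) (algebraMap R A mu) U V Z p q

lemma ring_id_comm0 (A : Type) [CommRing A] [Algebra R A] (lam mu : R) (U V Z : A)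
    (p q : ℕ) :
    ∑ j ∈ Finset.range (q+1), ((q.choose j : R) * mu^j) • (Z * V^j * (1 + lam • U)^p)
    = ∑ k ∈ Finset.range (p+1), ((p.choose k : R) * lam^k) • (Z * U^k * (1 + mu • V)^q) := by
  simp only [Algebra.smul_def, map_mul, map_pow, map_natCast]
  set L := algebraMap R A lam
  set M := algebraMap R A mu
  have h1 : ∑ j ∈ Finset.range (q+1), (q.choose j : A) * M^j * (Z * V^j * (1 + L * U)^p)
      = (Z * (1 + L*U)^p) * ∑ j ∈ Finset.range (q+1), ((q.choose j : A) * (M*V)^j) := by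
    rw [Finset.mul_sum]
    exact Finset.sum_congr rfl fun j _ => by ring
  have h2 : ∑ k ∈ Finset.range (p+1), (p.choose k : A) * L^k * (Z * U^k * (1 + M * V)^q)
      = (Z * (1 + M*V)^q) * ∑ k ∈ Finset.range (p+1), ((p.choose k : A) * (L*U)^k) := by
    rw [Finset.mul_sum]
    exact Finset.sum_congr rfl fun k _ => by ring
  rw [h1, h2, sum_choose_one, sum_choose_one]
  ring

lemma ring_id_comm1 (A : Type) [CommRing A] [Algebra R A] (lam mu : R) (U V Z : A)
    (p : ℕ) :
    ∑ j ∈ Finset.range (p+1), ((p.choose j : R) * mu^j) • (Z * V^j * (1 + lam • U)^(p-j))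
    = ∑ k ∈ Finset.range (p+1), ((p.choose k : R) * lam^k) • (Z * U^k * (1 + mu • V)^(p-k)) := by
  simp only [Algebra.smul_def, map_mul, map_pow, map_natCast]
  set L := algebraMap R A lam
  set M := algebraMap R A mu
  have h1 : ∑ j ∈ Finset.range (p+1), (p.choose j : A) * M^j * (Z * V^j * (1 + L * U)^(p-j))
      = Z * ∑ j ∈ Finset.range (p+1), ((p.choose j : A) * (M*V)^j * (1 + L*U)^(p-j)) := by
    rw [Finset.mul_sum]
    exact Finset.sum_congr rfl fun j _ => by ring
  have h2 : ∑ k ∈ Finset.range (p+1), (p.choose k : A) * L^k * (Z * U^k * (1 + M * V)^(p-k))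
      = Z * ∑ k ∈ Finset.range (p+1), ((p.choose k : A) * (L*U)^k * (1 + M*V)^(p-k)) := by
    rw [Finset.mul_sum]
    exact Finset.sum_congr rfl fun k _ => by ring
  rw [h1, h2, sum_choose_mul, sum_choose_mul]
  rw [show (M*V) + (1 + L*U) = (L*U) + (1 + M*V) from by ring]

/-! #### Composite computations -/

lemma single_add_smul (y : (Fin n → ℤ) × ℤ) (m : ℕ) (w' : (Fin n → ℤ) × ℤ) :
    AddMonoidAlgebra.single (y + m • w') (1:R)
      = AddMonoidAlgebra.single y (1:R) * (AddMonoidAlgebra.single w' (1:R))^m := by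
  rw [AddMonoidAlgebra.single_pow, one_pow, AddMonoidAlgebra.single_mul_single, mul_one]

lemma single_eq_smul (w' : (Fin n → ℤ) × ℤ) (t : R) :
    (AddMonoidAlgebra.single w' t : AddMonoidAlgebra R ((Fin n → ℤ) × ℤ))
      = t • AddMonoidAlgebra.single w' (1:R) := by
  rw [AddMonoidAlgebra.smul_single', mul_one]

lemma grand_prod {u v : Fin n → ℤ} {Fu Fv Fw : P.Facet}
    (hu : P.IsBaseFacet u Fu) (hv : P.IsBaseFacet v Fv)
    (hfu_u : Fu.form u = -1) (hfv_v : Fv.form v = -1) (hfu_v : Fu.form v = 0)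
    (hfv_u : Fv.form u = 1)
    (hwf : Fw.form = Fu.form) (hwb : Fw.b = Fu.b)
    (lam mu : R) (e1 e2 e3 e4 eW : polyAlg R P ≃ₐ[R] polyAlg R P)
    (he1 : ElemAutProp R u Fu lam e1.toAlgHom)
    (he2 : ElemAutProp R v Fv mu e2.toAlgHom)
    (he3 : ElemAutProp R u Fu (-lam) e3.toAlgHom)
    (he4 : ElemAutProp R v Fv (-mu) e4.toAlgHom)
    (heW : ElemAutProp R (u+v) Fw (-(lam*mu)) eW.toAlgHom)
    {z : (Fin n → ℤ) × ℤ} (hz : z ∈ P.SP) :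
    e1 (e2 (e3 (e4 (gs R P z)))) = eW (gs R P z) := by
  have hp0 := sp_ht_nonneg Fu hz
  have hq0 := sp_ht_nonneg Fv hz
  set p : ℕ := (htF Fu z).toNat with hpdef
  set q : ℕ := (htF Fv z).toNat with hqdef
  have hp : htF Fu z = (p : ℤ) := (Int.toNat_of_nonneg hp0).symm
  have hq : htF Fv z = (q : ℤ) := (Int.toNat_of_nonneg hq0).symm
  have hzj : ∀ j : ℕ, j ≤ q → z + j • ((v,(0:ℤ))) ∈ P.SP := fun j hj =>
    sp_add_col_smul hv hfv_v hz j (by rw [hq]; exact_mod_cast hj)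
  have hhj_u : ∀ j : ℕ, htF Fu (z + j • ((v,(0:ℤ)))) = (p : ℤ) := fun j => by
    rw [htF_add_smul, hfu_v, hp]; ring
  have hhj_v : ∀ j : ℕ, htF Fv (z + j • ((v,(0:ℤ)))) = (q : ℤ) - j := fun j => by
    rw [htF_add_smul, hfv_v, hq]; ring
  have hzjk : ∀ j k : ℕ, j ≤ q → k ≤ p →
      z + j • ((v,(0:ℤ))) + k • ((u,(0:ℤ))) ∈ P.SP := fun j k hj hk =>
    sp_add_col_smul hu hfu_u (hzj j hj) k (by rw [hhj_u j]; exact_mod_cast hk)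
  have hhjk_v : ∀ j k : ℕ, j ≤ q →
      htF Fv (z + j • ((v,(0:ℤ))) + k • ((u,(0:ℤ)))) = (((q - j) + k : ℕ) : ℤ) := by
    intro j k hj
    rw [htF_add_smul, hhj_v j, hfv_u]
    push_cast; omega
  have hhjk_u : ∀ j k : ℕ,
      htF Fu (z + j • ((v,(0:ℤ))) + k • ((u,(0:ℤ)))) = (p : ℤ) - k := fun j k => by
    rw [htF_add_smul, hhj_u j, hfu_u]; ring
  have hzjkl : ∀ j k l : ℕ, j ≤ q → k ≤ p → l ≤ (q-j)+k →
      z + j • ((v,(0:ℤ))) + k • ((u,(0:ℤ))) + l • ((v,(0:ℤ))) ∈ P.SP := fun j k l hj hk hl =>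
    sp_add_col_smul hv hfv_v (hzjk j k hj hk) l (by rw [hhjk_v j k hj]; exact_mod_cast hl)
  have hhjkl_u : ∀ j k l : ℕ, k ≤ p →
      htF Fu (z + j • ((v,(0:ℤ))) + k • ((u,(0:ℤ))) + l • ((v,(0:ℤ)))) = ((p - k : ℕ) : ℤ) := by
    intro j k l hk
    rw [htF_add_smul, hhjk_u j k, hfu_v]
    push_cast; omega
  have S2 : e3 (e4 (gs R P z)) = ∑ j ∈ Finset.range (q+1), ((q.choose j : R) * (-mu)^j) •
      ∑ k ∈ Finset.range (p+1), ((p.choose k : R) * (-lam)^k) •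
        gs R P (z + j • ((v,(0:ℤ))) + k • ((u,(0:ℤ)))) := by
    rw [apply_gs R hv hfv_v he4 hz hq, map_sum]
    refine Finset.sum_congr rfl fun j hj => ?_
    rw [map_smul,
      apply_gs R hu hfu_u he3 (hzj j (Nat.lt_succ_iff.1 (Finset.mem_range.1 hj))) (hhj_u j)]
  have S3 : e2 (e3 (e4 (gs R P z))) = ∑ j ∈ Finset.range (q+1), ((q.choose j : R) * (-mu)^j) •
      ∑ k ∈ Finset.range (p+1), ((p.choose k : R) * (-lam)^k) •
        ∑ l ∈ Finset.range (((q-j)+k)+1), ((((q-j)+k).choose l : R) * mu^l) •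
          gs R P (z + j • ((v,(0:ℤ))) + k • ((u,(0:ℤ))) + l • ((v,(0:ℤ)))) := by
    rw [S2, map_sum]
    refine Finset.sum_congr rfl fun j hj => ?_
    rw [map_smul, map_sum]
    refine congrArg (HSMul.hSMul _) (Finset.sum_congr rfl fun k hk => ?_)
    rw [map_smul,
      apply_gs R hv hfv_v he2
        (hzjk j k (Nat.lt_succ_iff.1 (Finset.mem_range.1 hj))
          (Nat.lt_succ_iff.1 (Finset.mem_range.1 hk)))
        (hhjk_v j k (Nat.lt_succ_iff.1 (Finset.mem_range.1 hj)))]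
  apply Subtype.ext
  rw [S3, map_sum, AddSubmonoidClass.coe_finset_sum, coe_apply_gs R heW hz]
  have hWz : htF Fw z = (p : ℤ) := by
    have h2 : htF Fw z = htF Fu z := by unfold LatticePolytope.htF; rw [hwf, hwb]
    rw [h2, hp]
  unfold phiMap
  rw [hWz]
  simp only [Int.toNat_natCast]
  have hsW : (AddMonoidAlgebra.single ((u+v, (0:ℤ))) (-(lam*mu))
        : AddMonoidAlgebra R ((Fin n → ℤ) × ℤ))
      = (-(lam*mu)) • (AddMonoidAlgebra.single ((u,(0:ℤ))) (1:R)
          * AddMonoidAlgebra.single ((v,(0:ℤ))) (1:R)) := by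
    rw [AddMonoidAlgebra.single_mul_single, one_mul, AddMonoidAlgebra.smul_single', mul_one]
    simp [Prod.mk_add_mk]
  rw [hsW]
  trans (∑ j ∈ Finset.range (q+1), ((q.choose j : R) * (-mu)^j) •
      ∑ k ∈ Finset.range (p+1), ((p.choose k : R) * (-lam)^k) •
        ∑ l ∈ Finset.range (((q-j)+k)+1), ((((q-j)+k).choose l : R) * mu^l) •
          (AddMonoidAlgebra.single z (1:R)
            * (AddMonoidAlgebra.single ((v,(0:ℤ))) (1:R))^j
            * (AddMonoidAlgebra.single ((u,(0:ℤ))) (1:R))^k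
            * (AddMonoidAlgebra.single ((v,(0:ℤ))) (1:R))^l
            * (1 + lam • AddMonoidAlgebra.single ((u,(0:ℤ))) (1:R))^(p-k)))
  · refine Finset.sum_congr rfl fun j hj => ?_
    rw [map_smul, Subalgebra.coe_smul]
    congr 1
    rw [map_sum, AddSubmonoidClass.coe_finset_sum]
    refine Finset.sum_congr rfl fun k hk => ?_
    rw [map_smul, Subalgebra.coe_smul]
    congr 1
    rw [map_sum, AddSubmonoidClass.coe_finset_sum]
    refine Finset.sum_congr rfl fun l hl => ?_
    rw [map_smul, Subalgebra.coe_smul]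
    congr 1
    rw [coe_apply_gs R he1
      (hzjkl j k l (Nat.lt_succ_iff.1 (Finset.mem_range.1 hj))
        (Nat.lt_succ_iff.1 (Finset.mem_range.1 hk))
        (Nat.lt_succ_iff.1 (Finset.mem_range.1 hl)))]
    unfold phiMap
    rw [hhjkl_u j k l (Nat.lt_succ_iff.1 (Finset.mem_range.1 hk))]
    simp only [Int.toNat_natCast]
    rw [single_add_smul, single_add_smul, single_add_smul, single_eq_smul R ((u,(0:ℤ))) lam]
  · exact ring_id_prod R _ lam mu _ _ _ p q

lemma grand_comm0 {u v : Fin n → ℤ} {Fu Fv : P.Facet}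
    (hu : P.IsBaseFacet u Fu) (hv : P.IsBaseFacet v Fv)
    (hfu_u : Fu.form u = -1) (hfv_v : Fv.form v = -1)
    (hfu_v : Fu.form v = 0) (hfv_u : Fv.form u = 0)
    (lam mu : R) (e1 e2 : polyAlg R P ≃ₐ[R] polyAlg R P)
    (he1 : ElemAutProp R u Fu lam e1.toAlgHom)
    (he2 : ElemAutProp R v Fv mu e2.toAlgHom)
    {z : (Fin n → ℤ) × ℤ} (hz : z ∈ P.SP) :
    e1 (e2 (gs R P z)) = e2 (e1 (gs R P z)) := by
  have hp0 := sp_ht_nonneg Fu hz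
  have hq0 := sp_ht_nonneg Fv hz
  set p : ℕ := (htF Fu z).toNat with hpdef
  set q : ℕ := (htF Fv z).toNat with hqdef
  have hp : htF Fu z = (p : ℤ) := (Int.toNat_of_nonneg hp0).symm
  have hq : htF Fv z = (q : ℤ) := (Int.toNat_of_nonneg hq0).symm
  have hzj : ∀ j : ℕ, j ≤ q → z + j • ((v,(0:ℤ))) ∈ P.SP := fun j hj =>
    sp_add_col_smul hv hfv_v hz j (by rw [hq]; exact_mod_cast hj)
  have hhj_u : ∀ j : ℕ, htF Fu (z + j • ((v,(0:ℤ)))) = (p : ℤ) := fun j => by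
    rw [htF_add_smul, hfu_v, hp]; ring
  have hzk : ∀ k : ℕ, k ≤ p → z + k • ((u,(0:ℤ))) ∈ P.SP := fun k hk =>
    sp_add_col_smul hu hfu_u hz k (by rw [hp]; exact_mod_cast hk)
  have hhk_v : ∀ k : ℕ, htF Fv (z + k • ((u,(0:ℤ)))) = (q : ℤ) := fun k => by
    rw [htF_add_smul, hfv_u, hq]; ring
  apply Subtype.ext
  rw [apply_gs R hv hfv_v he2 hz hq, apply_gs R hu hfu_u he1 hz hp, map_sum, map_sum,
    AddSubmonoidClass.coe_finset_sum, AddSubmonoidClass.coe_finset_sum]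
  trans (∑ j ∈ Finset.range (q+1), ((q.choose j : R) * mu^j) •
      (AddMonoidAlgebra.single z (1:R)
        * (AddMonoidAlgebra.single ((v,(0:ℤ))) (1:R))^j
        * (1 + lam • AddMonoidAlgebra.single ((u,(0:ℤ))) (1:R))^p))
  · refine Finset.sum_congr rfl fun j hj => ?_
    rw [map_smul, Subalgebra.coe_smul]
    congr 1
    rw [coe_apply_gs R he1 (hzj j (Nat.lt_succ_iff.1 (Finset.mem_range.1 hj)))]
    unfold phiMap
    rw [hhj_u j]
    simp only [Int.toNat_natCast]
    rw [single_add_smul, single_eq_smul R ((u,(0:ℤ))) lam]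
  trans (∑ k ∈ Finset.range (p+1), ((p.choose k : R) * lam^k) •
      (AddMonoidAlgebra.single z (1:R)
        * (AddMonoidAlgebra.single ((u,(0:ℤ))) (1:R))^k
        * (1 + mu • AddMonoidAlgebra.single ((v,(0:ℤ))) (1:R))^q))
  · exact ring_id_comm0 R _ lam mu _ _ _ p q
  · symm
    refine Finset.sum_congr rfl fun k hk => ?_
    rw [map_smul, Subalgebra.coe_smul]
    congr 1
    rw [coe_apply_gs R he2 (hzk k (Nat.lt_succ_iff.1 (Finset.mem_range.1 hk)))]
    unfold phiMap
    rw [hhk_v k]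
    simp only [Int.toNat_natCast]
    rw [single_add_smul, single_eq_smul R ((v,(0:ℤ))) mu]

lemma grand_comm1 {u v : Fin n → ℤ} {Fu Fv : P.Facet}
    (hu : P.IsBaseFacet u Fu) (hv : P.IsBaseFacet v Fv)
    (hfu_u : Fu.form u = -1) (hfv_v : Fv.form v = -1)
    (hef : Fv.form = Fu.form) (heb : Fv.b = Fu.b)
    (lam mu : R) (e1 e2 : polyAlg R P ≃ₐ[R] polyAlg R P)
    (he1 : ElemAutProp R u Fu lam e1.toAlgHom)
    (he2 : ElemAutProp R v Fv mu e2.toAlgHom)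
    {z : (Fin n → ℤ) × ℤ} (hz : z ∈ P.SP) :
    e1 (e2 (gs R P z)) = e2 (e1 (gs R P z)) := by
  have hfu_v : Fu.form v = -1 := by rw [← hef]; exact hfv_v
  have hfv_u : Fv.form u = -1 := by rw [hef]; exact hfu_u
  have hqp : ∀ y, htF Fv y = htF Fu y := by
    intro y; unfold LatticePolytope.htF; rw [hef, heb]
  have hp0 := sp_ht_nonneg Fu hz
  set p : ℕ := (htF Fu z).toNat with hpdef
  have hp : htF Fu z = (p : ℤ) := (Int.toNat_of_nonneg hp0).symm
  have hq : htF Fv z = (p : ℤ) := by rw [hqp, hp]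
  have hzj : ∀ j : ℕ, j ≤ p → z + j • ((v,(0:ℤ))) ∈ P.SP := fun j hj =>
    sp_add_col_smul hv hfv_v hz j (by rw [hq]; exact_mod_cast hj)
  have hhj_u : ∀ j : ℕ, j ≤ p → htF Fu (z + j • ((v,(0:ℤ)))) = ((p - j : ℕ) : ℤ) := by
    intro j hj
    rw [htF_add_smul, hfu_v, hp]
    push_cast; omega
  have hzk : ∀ k : ℕ, k ≤ p → z + k • ((u,(0:ℤ))) ∈ P.SP := fun k hk =>
    sp_add_col_smul hu hfu_u hz k (by rw [hp]; exact_mod_cast hk)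
  have hhk_v : ∀ k : ℕ, k ≤ p → htF Fv (z + k • ((u,(0:ℤ)))) = ((p - k : ℕ) : ℤ) := by
    intro k hk
    rw [hqp, htF_add_smul, hfu_u, hp]
    push_cast; omega
  apply Subtype.ext
  rw [apply_gs R hv hfv_v he2 hz hq, apply_gs R hu hfu_u he1 hz hp, map_sum, map_sum,
    AddSubmonoidClass.coe_finset_sum, AddSubmonoidClass.coe_finset_sum]
  trans (∑ j ∈ Finset.range (p+1), ((p.choose j : R) * mu^j) •
      (AddMonoidAlgebra.single z (1:R)
        * (AddMonoidAlgebra.single ((v,(0:ℤ))) (1:R))^j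
        * (1 + lam • AddMonoidAlgebra.single ((u,(0:ℤ))) (1:R))^(p-j)))
  · refine Finset.sum_congr rfl fun j hj => ?_
    rw [map_smul, Subalgebra.coe_smul]
    congr 1
    rw [coe_apply_gs R he1 (hzj j (Nat.lt_succ_iff.1 (Finset.mem_range.1 hj)))]
    unfold phiMap
    rw [hhj_u j (Nat.lt_succ_iff.1 (Finset.mem_range.1 hj))]
    simp only [Int.toNat_natCast]
    rw [single_add_smul, single_eq_smul R ((u,(0:ℤ))) lam]
  trans (∑ k ∈ Finset.range (p+1), ((p.choose k : R) * lam^k) •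
      (AddMonoidAlgebra.single z (1:R)
        * (AddMonoidAlgebra.single ((u,(0:ℤ))) (1:R))^k
        * (1 + mu • AddMonoidAlgebra.single ((v,(0:ℤ))) (1:R))^(p-k)))
  · exact ring_id_comm1 R _ lam mu _ _ _ p
  · symm
    refine Finset.sum_congr rfl fun k hk => ?_
    rw [map_smul, Subalgebra.coe_smul]
    congr 1
    rw [coe_apply_gs R he2 (hzk k (Nat.lt_succ_iff.1 (Finset.mem_range.1 hk)))]
    unfold phiMap
    rw [hhk_v k (Nat.lt_succ_iff.1 (Finset.mem_range.1 hk))]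
    simp only [Int.toNat_natCast]
    rw [single_add_smul, single_eq_smul R ((v,(0:ℤ))) mu]

lemma eq_on_gs {e f : polyAlg R P ≃ₐ[R] polyAlg R P}
    (h : ∀ z ∈ P.SP, e (gs R P z) = f (gs R P z)) : e = f := by
  apply AlgEquiv.ext
  intro a
  refine Algebra.adjoin_induction
    (p := fun x hx => e ⟨x, hx⟩ = f ⟨x, hx⟩) ?_ ?_ ?_ ?_ a.2
  · rintro x ⟨x₀, hx₀, rfl⟩
    have hz : ((x₀, (1:ℤ)) : (Fin n → ℤ) × ℤ) ∈ P.SP :=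
      AddSubmonoid.subset_closure ⟨x₀, hx₀, rfl⟩
    have h2 := h _ hz
    convert h2 using 2 <;> exact Subtype.ext (gs_coe R hz).symm
  · intro r; exact (e.commutes r).trans (f.commutes r).symm
  · intro x y hx' hy' hx hy
    show e (⟨x, hx'⟩ + ⟨y, hy'⟩) = f (⟨x, hx'⟩ + ⟨y, hy'⟩)
    rw [map_add, map_add, hx, hy]
  · intro x y hx' hy' hx hy
    show e (⟨x, hx'⟩ * ⟨y, hy'⟩) = f (⟨x, hx'⟩ * ⟨y, hy'⟩)
    rw [map_mul, map_mul, hx, hy]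

end Alg

end BGAux
/-- Steinberg relations for elementary automorphisms over a balanced polytope:
if `uv` exists then `[e_u^λ, e_v^μ] = e_{uv}^{-λμ}`, and if `u+v ∉ Col(P)`
then `e_u^λ` and `e_v^μ` commute. -/
theorem statement7 {n : ℕ} (P : LatticePolytope n) (hfd : P.IsFullDim)
    (hgen : P.AffGen) (hbal : P.Balanced) (R : Type) [CommRing R]
    (u v : Fin n → ℤ) (Fu Fv : P.Facet)
    (hu : P.IsBaseFacet u Fu) (hv : P.IsBaseFacet v Fv) (huv : u + v ≠ 0)
    (Eu Ev : R → (polyAlg R P ≃ₐ[R] polyAlg R P))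
    (hEu : ∀ lam, ElemAutProp R u Fu lam (Eu lam).toAlgHom)
    (hEv : ∀ lam, ElemAutProp R v Fv lam (Ev lam).toAlgHom)
    (lam mu : R) :
    (∀ (Fw : P.Facet) (Euv : R → (polyAlg R P ≃ₐ[R] polyAlg R P)),
      P.IsBaseFacet (u + v) Fw →
      (∀ c, ElemAutProp R (u + v) Fw c (Euv c).toAlgHom) →
      P.ProdEx u v →
      Eu lam * Ev mu * Eu (-lam) * Ev (-mu) = Euv (-(lam * mu))) ∧
    (¬ P.IsColVec (u + v) → Eu lam * Ev mu = Ev mu * Eu lam) := by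
  constructor
  · intro Fw Euv hw hEuv hpe
    have hfu_u : Fu.form u = -1 := form_base hgen hu
    have hfv_v : Fv.form v = -1 := form_base hgen hv
    have hwFu : P.IsBaseFacet (u+v) Fu := by
      refine ⟨huv, fun x hx hnx => ?_⟩
      have h1 : x + u ∈ P.latticePoints := hu.2 x hx hnx
      have h2 : toR (x + u) ∉ Fv.set := hpe.2.2.2 Fu Fv hu hv x hx hnx
      have h3 : (x + u) + v ∈ P.latticePoints := hv.2 (x+u) h1 h2
      show toR (x + (u + v)) ∈ P.carrier
      rw [← add_assoc]
      exact h3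
    obtain ⟨hwf, hwb⟩ := base_facet_unique hgen hwFu hw
    have hfu_w : Fu.form (u+v) = -1 := form_base hgen hwFu
    have hfu_v : Fu.form v = 0 := by
      rw [map_add] at hfu_w; omega
    have hfv_u : Fv.form u = 1 := by
      have hble : Fv.form u ≤ 1 := hbal v u Fv hv ⟨Fu, hu⟩
      by_contra hne
      have hcontain : ∀ z ∈ P.latticePoints, Fv.form z = Fv.b → Fu.form z = Fu.b := by
        intro z hz hzv
        by_contra hzu
        have hnz : toR z ∉ Fu.set := fun hmem => hzu ((mem_set_iff Fu hz).1 hmem)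
        have h1 : z + u ∈ P.latticePoints := hu.2 z hz hnz
        rcases lt_or_ge (Fv.form u) 0 with hneg | hpos
        · have h2 := form_ge Fv h1
          rw [map_add, hzv] at h2
          omega
        · have h0 : Fv.form u = 0 := by omega
          have h2 := hpe.2.2.2 Fu Fv hu hv z hz hnz
          apply h2
          rw [mem_set_iff Fv h1, map_add, hzv, h0, add_zero]
      rcases facet_dep Fv Fu hcontain with ⟨hef, heb⟩ | hneg2
      · obtain ⟨z₁, hz₁, hz₁e⟩ := exists_ht_one hgen hu
        have hnz₁ : toR z₁ ∉ Fu.set := fun hmem => by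
          have := (mem_set_iff Fu hz₁).1 hmem; omega
        have h2 := hpe.2.2.2 Fu Fv hu hv z₁ hz₁ hnz₁
        have h1 : z₁ + u ∈ P.latticePoints := hu.2 z₁ hz₁ hnz₁
        apply h2
        rw [mem_set_iff Fv h1, map_add, ← hef, ← heb, hz₁e, hfu_u]
        ring
      · have h3 := hneg2 u
        rw [hfu_u] at h3
        omega
    refine eq_on_gs R (fun z hz => ?_)
    rw [AlgEquiv.mul_apply, AlgEquiv.mul_apply, AlgEquiv.mul_apply]
    exact grand_prod R hu hv hfu_u hfv_v hfu_v hfv_u hwf hwb lam mu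
      (Eu lam) (Ev mu) (Eu (-lam)) (Ev (-mu)) (Euv (-(lam*mu)))
      (hEu lam) (hEv mu) (hEu (-lam)) (hEv (-mu)) (hEuv (-(lam*mu))) hz
  · intro hncol
    have hfu_u : Fu.form u = -1 := form_base hgen hu
    have hfv_v : Fv.form v = -1 := form_base hgen hv
    have ha1 : Fu.form v ≠ 1 := by
      intro h1
      apply hncol
      refine ⟨Fv, huv, fun x hx hnx => ?_⟩
      have h2 : x + v ∈ P.latticePoints := hv.2 x hx hnx
      have h3 : toR (x+v) ∉ Fu.set := by
        intro hmem
        have h4 := (mem_set_iff Fu h2).1 hmem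
        have h5 := form_ge Fu hx
        rw [map_add, h1] at h4
        omega
      have h5 : (x+v) + u ∈ P.latticePoints := hu.2 (x+v) h2 h3
      show toR (x + (u + v)) ∈ P.carrier
      rw [show x + (u+v) = (x+v)+u from by rw [add_comm u v, ← add_assoc]]
      exact h5
    have hb1 : Fv.form u ≠ 1 := by
      intro h1
      apply hncol
      refine ⟨Fu, huv, fun x hx hnx => ?_⟩
      have h2 : x + u ∈ P.latticePoints := hu.2 x hx hnx
      have h3 : toR (x+u) ∉ Fv.set := by
        intro hmem
        have h4 := (mem_set_iff Fv h2).1 hmem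
        have h5 := form_ge Fv hx
        rw [map_add, h1] at h4
        omega
      have h5 : (x+u) + v ∈ P.latticePoints := hv.2 (x+u) h2 h3
      show toR (x + (u + v)) ∈ P.carrier
      rw [← add_assoc]
      exact h5
    have hble_a : Fu.form v ≤ 1 := hbal u v Fu hu ⟨Fv, hv⟩
    have hble_b : Fv.form u ≤ 1 := hbal v u Fv hv ⟨Fu, hu⟩
    have hdich : (Fu.form v = 0 ∧ Fv.form u = 0) ∨ (Fv.form = Fu.form ∧ Fv.b = Fu.b) := by
      rcases le_or_gt (Fu.form v) (-1) with hng | h0a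
      · right
        have hcontain : ∀ z ∈ P.latticePoints, Fu.form z = Fu.b → Fv.form z = Fv.b := by
          intro z hz hzu
          by_contra hzv
          have h1 : z + v ∈ P.latticePoints :=
            hv.2 z hz (fun hmem => hzv ((mem_set_iff Fv hz).1 hmem))
          have h2 := form_ge Fu h1
          rw [map_add, hzu] at h2
          omega
        rcases facet_dep Fu Fv hcontain with h1 | h2
        · exact h1
        · exfalso
          have h3 := h2 v
          rw [hfv_v] at h3
          omega
      · rcases le_or_gt (Fv.form u) (-1) with hng2 | h0b
        · right
          have hcontain : ∀ z ∈ P.latticePoints, Fv.form z = Fv.b → Fu.form z = Fu.b := by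
            intro z hz hzv
            by_contra hzu
            have h1 : z + u ∈ P.latticePoints :=
              hu.2 z hz (fun hmem => hzu ((mem_set_iff Fu hz).1 hmem))
            have h2 := form_ge Fv h1
            rw [map_add, hzv] at h2
            omega
          rcases facet_dep Fv Fu hcontain with ⟨h1f, h1b⟩ | h2
          · exact ⟨h1f.symm, h1b.symm⟩
          · exfalso
            have h3 := h2 u
            rw [hfu_u] at h3
            omega
        · left
          constructor <;> omega
    rcases hdich with ⟨ha, hb⟩ | ⟨hef, heb⟩
    · refine eq_on_gs R (fun z hz => ?_)
      rw [AlgEquiv.mul_apply, AlgEquiv.mul_apply]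
      exact grand_comm0 R hu hv hfu_u hfv_v ha hb lam mu (Eu lam) (Ev mu)
        (hEu lam) (hEv mu) hz
    · refine eq_on_gs R (fun z hz => ?_)
      rw [AlgEquiv.mul_apply, AlgEquiv.mul_apply]
      exact grand_comm1 R hu hv hfu_u hfv_v hef heb lam mu (Eu lam) (Ev mu)
        (hEu lam) (hEv mu) hz
end
end

section
/- Let P be a full-dimensional lattice polytope whose lattice points affinely generate ℤ^n. If the product v_1⋯v_m of column vectors v_1, …, v_m ∈ Col(P) exists (strongly), then v_1, …, v_m are linearly independent over ℚ. In particular they are pairwise distinct and Σ_{i ∈ I} v_i ≠ 0 for every nonempty subset I ⊆ {1, …, m}. -/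
open Set

noncomputable section

namespace ProofAux

open LatticePolytope

variable {n : ℕ}

lemma form_eq_sum (φ : (Fin n → ℤ) →+ ℤ) (z : Fin n → ℤ) :
    φ z = ∑ i, z i * φ (Pi.single i 1) := by
  conv_lhs => rw [← Finset.univ_sum_single z]
  rw [map_sum]
  refine Finset.sum_congr rfl fun i _ => ?_
  have h1 : Pi.single i (z i) = ((z i • Pi.single i 1 : Fin n → ℤ)) := by
    rw [← Pi.single_smul, smul_eq_mul, mul_one]
  rw [h1, map_zsmul, smul_eq_mul]

lemma formR_toR (φ : (Fin n → ℤ) →+ ℤ) (z : Fin n → ℤ) :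
    formR φ (toR z) = (φ z : ℝ) := by
  rw [form_eq_sum φ z]
  push_cast
  rfl

lemma form_eq_sum_q (φ : (Fin n → ℤ) →+ ℤ) (z : Fin n → ℤ) :
    ∑ i, (z i : ℚ) * (φ (Pi.single i 1) : ℚ) = (φ z : ℚ) := by
  rw [form_eq_sum φ z]
  push_cast
  rfl

/-- `formR` as a linear map. -/
def formL (φ : (Fin n → ℤ) →+ ℤ) : (Fin n → ℝ) →ₗ[ℝ] ℝ where
  toFun := formR φ
  map_add' x y := by
    simp only [formR, Pi.add_apply, add_mul, Finset.sum_add_distrib]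
  map_smul' a x := by
    simp only [formR, Pi.smul_apply, smul_eq_mul, RingHom.id_apply, Finset.mul_sum, mul_assoc]

lemma facet_convex (P : LatticePolytope n) (F : P.Facet) : Convex ℝ F.set := by
  have hset : F.set = P.carrier ∩ {x | formL F.form x = (F.b : ℝ)} := rfl
  rw [hset]
  exact (convex_convexHull ℝ _).inter (convex_hyperplane (formL F.form).isLinear _)

lemma verts_mem_lattice (P : LatticePolytope n) {x : Fin n → ℤ} (hx : x ∈ P.verts) :
    x ∈ P.latticePoints := by
  apply subset_convexHull ℝ _
  simp only [Finset.coe_image, Set.mem_image, Finset.mem_coe]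
  exact ⟨x, hx, rfl⟩

lemma height_nonneg (P : LatticePolytope n) (F : P.Facet) {z : Fin n → ℤ}
    (hz : z ∈ P.latticePoints) : F.b ≤ F.form z := by
  have := F.min_le (toR z) hz
  rw [formR_toR] at this
  exact_mod_cast this

lemma mem_set_iff (P : LatticePolytope n) (F : P.Facet) {z : Fin n → ℤ}
    (hz : z ∈ P.latticePoints) : toR z ∈ F.set ↔ F.form z = F.b := by
  unfold Facet.set
  rw [Set.mem_setOf_eq, formR_toR]
  constructor
  · rintro ⟨-, h2⟩; exact_mod_cast h2
  · intro h; exact ⟨hz, by exact_mod_cast h⟩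

lemma height_pos (P : LatticePolytope n) (F : P.Facet) {z : Fin n → ℤ}
    (hz : z ∈ P.latticePoints) (hz' : toR z ∉ F.set) : F.b + 1 ≤ F.form z := by
  have h1 := height_nonneg P F hz
  have h2 : F.form z ≠ F.b := fun h => hz' ((mem_set_iff P F hz).2 h)
  omega

lemma toR_ne_zero {u : Fin n → ℤ} (hu : u ≠ 0) : toR u ≠ 0 := by
  intro h
  apply hu
  funext i
  have := congrFun h i
  simpa [toR] using this

lemma no_escape (P : LatticePolytope n) (F : P.Facet) {u : Fin n → ℤ} (hu : u ≠ 0)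
    (hstep : ∀ z ∈ P.latticePoints, toR z ∉ F.set → z + u ∈ P.latticePoints)
    (hform : 0 ≤ F.form u)
    {x0 : Fin n → ℤ} (hx0 : x0 ∈ P.latticePoints) (hx0' : toR x0 ∉ F.set) : False := by
  have key : ∀ k : ℕ, (x0 + k • u) ∈ P.latticePoints ∧ F.b + 1 ≤ F.form (x0 + k • u) := by
    intro k
    induction k with
    | zero => simpa using ⟨hx0, height_pos P F hx0 hx0'⟩
    | succ k ih =>
      have hoff : toR (x0 + k • u) ∉ F.set := by
        intro hmem
        have := (mem_set_iff P F ih.1).1 hmem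
        omega
      have heq : x0 + (k + 1) • u = (x0 + k • u) + u := by
        rw [succ_nsmul, ← add_assoc]
      refine ⟨heq ▸ hstep _ ih.1 hoff, ?_⟩
      rw [heq, map_add]
      have := ih.2
      omega
  obtain ⟨C, hC⟩ := isBounded_iff_forall_norm_le.1
    (isBounded_convexHull.2 (P.verts.image toR).finite_toSet.isBounded)
  have hbig : ∀ k : ℕ, (k : ℝ) * ‖toR u‖ ≤ C + ‖toR x0‖ := by
    intro k
    have hnorm := hC _ ((key k).1)
    have heq : toR (x0 + k • u) = toR x0 + (k : ℝ) • toR u := by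
      funext i
      simp only [toR, Pi.add_apply, Pi.smul_apply, nsmul_eq_mul, Pi.mul_apply, Pi.natCast_apply, smul_eq_mul]
      push_cast
      ring
    rw [heq] at hnorm
    have h2 := norm_add_le (-(toR x0)) (toR x0 + (k : ℝ) • toR u)
    rw [neg_add_cancel_left, norm_neg] at h2
    rw [norm_smul, Real.norm_natCast] at h2
    linarith
  have hupos : 0 < ‖toR u‖ := norm_pos_iff.2 (toR_ne_zero hu)
  obtain ⟨k, hk⟩ := exists_nat_gt ((C + ‖toR x0‖) / ‖toR u‖)
  have h1 := hbig k
  have h2 : (k : ℝ) ≤ (C + ‖toR x0‖) / ‖toR u‖ := (le_div_iff₀ hupos).2 h1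
  linarith

end ProofAux
namespace ProofAux

open LatticePolytope

variable {n : ℕ}

lemma finrank_carrier (P : LatticePolytope n) (hfd : P.IsFullDim) :
    Module.finrank ℝ (vectorSpan ℝ P.carrier) = n := by
  obtain ⟨x, hx⟩ := hfd
  obtain ⟨ε, hε, hball⟩ := Metric.isOpen_iff.1 isOpen_interior x hx
  have hsub : Metric.ball x ε ⊆ P.carrier := hball.trans interior_subset
  have htop : vectorSpan ℝ P.carrier = ⊤ := by
    rw [eq_top_iff]
    intro y _
    have hy : y = ∑ i, y i • (Pi.single i 1 : Fin n → ℝ) := by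
      conv_lhs => rw [← Finset.univ_sum_single y]
      refine Finset.sum_congr rfl fun i _ => ?_
      rw [← Pi.single_smul, smul_eq_mul, mul_one]
    rw [hy]
    refine Submodule.sum_mem _ fun i _ => Submodule.smul_mem _ _ ?_
    -- Pi.single i 1 ∈ vectorSpan
    have h1 : x + (ε / 2) • (Pi.single i 1 : Fin n → ℝ) ∈ P.carrier := by
      apply hsub
      rw [Metric.mem_ball, dist_eq_norm, add_sub_cancel_left, norm_smul, Pi.norm_single]
      simp only [norm_one, mul_one, Real.norm_eq_abs, abs_of_pos (by linarith : (0:ℝ) < ε / 2)]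
      linarith
    have h2 : x ∈ P.carrier := hsub (Metric.mem_ball_self hε)
    have h3 := vsub_mem_vectorSpan ℝ h1 h2
    have h4 : (x + (ε / 2) • (Pi.single i 1 : Fin n → ℝ)) -ᵥ x
        = (ε / 2) • (Pi.single i 1 : Fin n → ℝ) := by
      simp [vsub_eq_sub]
    rw [h4] at h3
    have h5 := Submodule.smul_mem _ (ε / 2)⁻¹ h3
    rwa [smul_smul, inv_mul_cancel₀ (by linarith), one_smul] at h5
  rw [htop, finrank_top, Module.finrank_pi]
  exact Fintype.card_fin n

lemma exists_off_facet (P : LatticePolytope n) (hfd : P.IsFullDim) (F : P.Facet) :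
    ∃ z ∈ P.latticePoints, toR z ∉ F.set := by
  by_contra hcon
  push_neg at hcon
  have hsub : P.carrier ⊆ F.set := by
    apply convexHull_min ?_ (facet_convex P F)
    rintro y hy
    rw [Finset.coe_image] at hy
    obtain ⟨z, hz, rfl⟩ := hy
    exact hcon z (verts_mem_lattice P hz)
  have heq : F.set = P.carrier := le_antisymm (fun y hy => hy.1) hsub
  have hdim := F.dim
  have hset : {y ∈ P.carrier | formR F.form y = (F.b : ℝ)} = F.set := rfl
  rw [hset, heq, finrank_carrier P hfd] at hdim
  omega

lemma base_form_le (P : LatticePolytope n) (hfd : P.IsFullDim) (F : P.Facet)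
    {v : Fin n → ℤ} (hv : P.IsBaseFacet v F) : F.form v ≤ -1 := by
  by_contra hcon
  push_neg at hcon
  obtain ⟨x0, hx0, hx0'⟩ := exists_off_facet P hfd F
  exact no_escape P F hv.1 (fun z hz hz' => hv.2 z hz hz') (by omega) hx0 hx0'

lemma exists_height_one (P : LatticePolytope n) (hfd : P.IsFullDim) (hgen : P.AffGen)
    (F : P.Facet) {v : Fin n → ℤ} (hv : P.IsBaseFacet v F) :
    ∃ z ∈ P.latticePoints, F.form z = F.b + 1 := by
  classical
  have hc := base_form_le P hfd F hv
  set c : ℤ := -F.form v with hcdef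
  have hc1 : 1 ≤ c := by omega
  -- the set of positive heights
  obtain ⟨x0, hx0, hx0'⟩ := exists_off_facet P hfd F
  have hSne : ∃ k : ℕ, 0 < k ∧ ∃ z ∈ P.latticePoints, F.form z = F.b + k := by
    refine ⟨(F.form x0 - F.b).toNat, ?_, x0, hx0, ?_⟩ <;>
      · have := height_pos P F hx0 hx0'; omega
  set h0 : ℕ := Nat.find hSne with hh0def
  obtain ⟨hh0pos, z0, hz0, hz0h⟩ := Nat.find_spec hSne
  have hmin : ∀ k : ℕ, 0 < k → (∃ z ∈ P.latticePoints, F.form z = F.b + k) → h0 ≤ k := by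
    intro k hk hex
    exact Nat.find_min' hSne ⟨hk, hex⟩
  -- step down by v
  have hstepdown : ∀ z ∈ P.latticePoints, F.b + 1 ≤ F.form z →
      z + v ∈ P.latticePoints ∧ F.form (z + v) = F.form z - c := by
    intro z hz hzpos
    have hoff : toR z ∉ F.set := by
      intro hmem
      have := (mem_set_iff P F hz).1 hmem
      omega
    refine ⟨hv.2 z hz hoff, ?_⟩
    rw [map_add]
    omega
  -- h0 = c
  have hh0c : (h0 : ℤ) = c := by
    obtain ⟨hz1, hz1h⟩ := hstepdown z0 hz0 (by omega)
    have hnonneg := height_nonneg P F hz1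
    -- F.form (z0+v) = F.b + h0 - c ≥ F.b so c ≤ h0
    rcases eq_or_lt_of_le hnonneg with heq | hlt
    · omega
    · -- positive height h0 - c ≥ h0 : contradiction unless impossible
      have : h0 ≤ ((F.form (z0 + v) - F.b).toNat) := by
        apply hmin _ (by omega)
        exact ⟨z0 + v, hz1, by omega⟩
      omega
  -- divisibility of all heights by c
  have hdvd : ∀ k : ℕ, ∀ z ∈ P.latticePoints, (F.form z - F.b).toNat = k →
      c ∣ (F.form z - F.b) := by
    intro k
    induction k using Nat.strong_induction_on with
    | _ k ih =>
      intro z hz hk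
      have hnn := height_nonneg P F hz
      rcases eq_or_lt_of_le hnn with heq | hlt
      · exact ⟨0, by omega⟩
      · obtain ⟨hz1, hz1h⟩ := hstepdown z hz (by omega)
        have hnn1 := height_nonneg P F hz1
        have hlt1 : (F.form (z + v) - F.b).toNat < k := by omega
        have := ih _ hlt1 (z + v) hz1 rfl
        obtain ⟨a, ha⟩ := this
        refine ⟨a + 1, ?_⟩
        rw [mul_add, mul_one, ← ha]
        omega
  -- AffGen forces c = 1
  obtain ⟨xv, hxv⟩ := P.nonem
  have hxvl : xv ∈ P.latticePoints := verts_mem_lattice P hxv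
  have hsubgrp : (⊤ : AddSubgroup (Fin n → ℤ)) ≤
      AddSubgroup.comap F.form (AddSubgroup.zmultiples c) := by
    rw [← hgen xv hxvl]
    rw [AddSubgroup.closure_le]
    rintro y ⟨x, hxl, rfl⟩
    have d1 := hdvd _ x hxl rfl
    have d2 := hdvd _ xv hxvl rfl
    obtain ⟨a1, ha1⟩ := d1
    obtain ⟨a2, ha2⟩ := d2
    simp only [SetLike.mem_coe, AddSubgroup.mem_comap, AddSubgroup.mem_zmultiples_iff]
    refine ⟨a1 - a2, ?_⟩
    rw [map_sub]
    simp only [zsmul_eq_mul]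
    push_cast
    linear_combination ha2 - ha1
  obtain ⟨y1, hy1⟩ := F.surj 1
  have := hsubgrp (AddSubgroup.mem_top y1)
  rw [AddSubgroup.mem_comap, hy1, AddSubgroup.mem_zmultiples_iff] at this
  obtain ⟨k, hk⟩ := this
  rw [zsmul_eq_mul] at hk
  have hcd : c ∣ 1 := ⟨k, by linear_combination -hk⟩
  have : c ≤ 1 := Int.le_of_dvd one_pos hcd
  have hc_eq : c = 1 := by omega
  exact ⟨z0, hz0, by omega⟩

end ProofAux
open ProofAux in
/-- If the product `v_1⋯v_m` exists strongly, then `v_1,…,v_m` are linearly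
independent over `ℚ`; in particular pairwise distinct, with all sums over
nonempty subsets nonzero. -/
theorem statement8 {n : ℕ} (P : LatticePolytope n) (hfd : P.IsFullDim)
    (hgen : P.AffGen) (m : ℕ) (v : Fin m → (Fin n → ℤ))
    (h : P.StrongProd (List.ofFn v)) :
    LinearIndependent ℚ (fun i : Fin m => fun j : Fin n => (v i j : ℚ)) ∧
    Function.Injective v ∧
    ∀ I : Finset (Fin m), I.Nonempty → ∑ i ∈ I, v i ≠ 0 := by
  classical
  obtain ⟨hne, hcol, hprod, hsums⟩ := h
  have hlen : (List.ofFn v).length = m := List.length_ofFn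
  -- choose base facets
  have hFc : ∀ i : Fin m, ∃ F : P.Facet, P.IsBaseFacet (v i) F := fun i =>
    hcol (v i) (List.mem_ofFn.2 ⟨i, rfl⟩)
  choose F hF using hFc
  -- consecutive products
  have hPE : ∀ (i : ℕ) (hi : i + 1 < m),
      P.ProdEx (v ⟨i, Nat.lt_of_succ_lt hi⟩) (v ⟨i + 1, hi⟩) := by
    intro i hi
    have h1 : i + 1 < (List.ofFn v).length := by rw [hlen]; exact hi
    have := hprod i h1
    rwa [List.get_ofFn, List.get_ofFn] at this
  -- interval sums
  set w : ℕ → ℕ → (Fin n → ℤ) := fun r s =>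
    ∑ i ∈ Finset.Icc r s, (if hi : i < m then v ⟨i, hi⟩ else 0) with hwdef
  have hwr : ∀ r (hr : r < m), w r r = v ⟨r, hr⟩ := by
    intro r hr
    simp [hwdef, Finset.Icc_self, hr]
  have hwsucc : ∀ r s (hrs : r ≤ s + 1) (hs : s + 1 < m),
      w r (s + 1) = w r s + v ⟨s + 1, hs⟩ := by
    intro r s hrs hs
    simp only [hwdef]
    rw [Finset.sum_Icc_succ_top hrs]
    simp [hs]
  -- the key invariant Q
  have Q : ∀ (s : ℕ) (hs : s < m) (r : ℕ) (hr : r ≤ s),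
      ∀ x ∈ P.latticePoints, toR x ∉ (F ⟨r, lt_of_le_of_lt hr hs⟩).set →
      (x + w r s) ∈ P.latticePoints ∧
        ∀ hs1 : s + 1 < m, toR (x + w r s) ∉ (F ⟨s + 1, hs1⟩).set := by
    intro s
    induction s with
    | zero =>
      intro hs r hr x hx hxoff
      interval_cases r
      rw [hwr 0 hs]
      refine ⟨(hF ⟨0, hs⟩).2 x hx hxoff, ?_⟩
      intro hs1
      exact (hPE 0 hs1).2.2.2 (F ⟨0, Nat.lt_of_succ_lt hs1⟩) (F ⟨1, hs1⟩)
        (hF _) (hF _) x hx hxoff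
    | succ s ih =>
      intro hs r hr x hx hxoff
      rcases Nat.lt_or_ge r (s + 1) with hrs | hrs
      · -- r ≤ s : use ih then add v (s+1)
        have hs' : s < m := Nat.lt_of_succ_lt hs
        have hr' : r ≤ s := by omega
        obtain ⟨hmem, hoff⟩ := ih hs' r hr' x hx hxoff
        have hoff1 := hoff hs
        have hmem1 : (x + w r s) + v ⟨s + 1, hs⟩ ∈ P.latticePoints :=
          (hF ⟨s + 1, hs⟩).2 _ hmem hoff1
        rw [hwsucc r s (by omega) hs, ← add_assoc]
        refine ⟨hmem1, ?_⟩
        intro hs1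
        exact (hPE (s + 1) hs1).2.2.2 (F ⟨s + 1, hs⟩) (F ⟨s + 2, hs1⟩)
          (hF _) (hF _) (x + w r s) hmem hoff1
      · -- r = s + 1
        have hreq : r = s + 1 := by omega
        subst hreq
        rw [hwr (s+1) hs]
        refine ⟨(hF ⟨s+1, hs⟩).2 x hx hxoff, ?_⟩
        intro hs1
        exact (hPE (s+1) hs1).2.2.2 (F ⟨s + 1, hs⟩) (F ⟨s + 2, hs1⟩)
          (hF _) (hF _) x hx hxoff
  -- interval sums are nonzero
  have hget : ∀ (r j : ℕ) (hj : r + j < m),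
      ((List.ofFn v).drop r)[j]? = some (v ⟨r + j, hj⟩) := by
    intro r j hj
    rw [List.getElem?_drop, List.getElem?_eq_getElem (by rw [hlen]; omega),
      List.getElem_ofFn]
  have hlist : ∀ (r k : ℕ), r + k < m →
      (((List.ofFn v).drop r).take (k + 1)).sum = w r (r + k) := by
    intro r k
    induction k with
    | zero =>
      intro hrk
      rw [List.take_succ, List.take_zero, List.nil_append, hget r 0 (by omega)]
      simp only [Option.toList_some, List.sum_cons, List.sum_nil, add_zero]
      exact (hwr r (by omega)).symm
    | succ k ih =>
      intro hrk
      rw [List.take_succ, List.sum_append, ih (by omega), hget r (k + 1) (by omega)]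
      simp only [Option.toList_some, List.sum_cons, List.sum_nil, add_zero]
      exact (hwsucc r (r + k) (by omega) (by omega)).symm
  have hw0 : ∀ (r s : ℕ), r ≤ s → s < m → w r s ≠ 0 := by
    intro r s hrs hs
    rcases eq_or_lt_of_le hrs with heq | hlt
    · subst heq
      rw [hwr r hs]
      exact (hF ⟨r, hs⟩).1
    · have := hsums r s hlt (by rw [hlen]; exact hs)
      have heq := hlist r (s - r) (by omega)
      rw [show r + (s - r) = s by omega] at heq
      rw [show s + 1 - r = (s - r) + 1 by omega] at this
      rwa [heq] at this
  -- heights of interval sums over the facet of the first index equal -1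
  have hm1 : ∀ (r s : ℕ) (hr : r ≤ s) (hs : s < m),
      (F ⟨r, lt_of_le_of_lt hr hs⟩).form (w r s) = -1 := by
    intro r s hr hs
    set Fr := F ⟨r, lt_of_le_of_lt hr hs⟩ with hFrdef
    have hle : Fr.form (w r s) ≤ -1 := by
      by_contra hcon
      push_neg at hcon
      obtain ⟨x0, hx0, hx0'⟩ := exists_off_facet P hfd Fr
      exact no_escape P Fr (hw0 r s hr hs)
        (fun z hz hz' => (Q s hs r hr z hz hz').1) (by omega) hx0 hx0'
    have hge : -1 ≤ Fr.form (w r s) := by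
      obtain ⟨z, hz, hz1⟩ := exists_height_one P hfd hgen Fr (hF _)
      have hoff : toR z ∉ Fr.set := by
        intro hmem
        have := (mem_set_iff P Fr hz).1 hmem
        omega
      have hmem := (Q s hs r hr z hz hoff).1
      have hnn := height_nonneg P Fr hmem
      rw [map_add] at hnn
      omega
    omega
  -- triangularity
  have hdiag : ∀ i : Fin m, (F i).form (v i) = -1 := by
    intro i
    have := hm1 i i le_rfl i.2
    rwa [hwr i i.2] at this
  have htri : ∀ i j : Fin m, (i : ℕ) < (j : ℕ) → (F i).form (v j) = 0 := by
    intro i j hij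
    obtain ⟨s, hs⟩ : ∃ s : ℕ, (j : ℕ) = s + 1 := ⟨(j : ℕ) - 1, by omega⟩
    have hjm : (s : ℕ) + 1 < m := hs ▸ j.2
    have h1 := hm1 i (s + 1) (by omega) hjm
    have h2 := hm1 i s (by omega) (by omega)
    rw [hwsucc i s (by omega) hjm, map_add] at h1
    have hFeq : (⟨(i : ℕ), lt_of_le_of_lt (by omega : (i:ℕ) ≤ s + 1) hjm⟩ : Fin m) = i :=
      Fin.eta i _
    have hFeq2 : (⟨(i : ℕ), lt_of_le_of_lt (by omega : (i:ℕ) ≤ s) (by omega : s < m)⟩ : Fin m) = i :=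
      Fin.eta i _
    rw [hFeq] at h1
    rw [hFeq2] at h2
    have hveq : (⟨s + 1, hjm⟩ : Fin m) = j := by
      apply Fin.ext
      simp [hs]
    rw [hveq] at h1
    omega
  -- linear independence
  have hLI : LinearIndependent ℚ (fun i : Fin m => fun j : Fin n => (v i j : ℚ)) := by
    rw [Fintype.linearIndependent_iff]
    intro g hg
    suffices hsuf : ∀ (k : ℕ) (i : Fin m), (i : ℕ) = k → g i = 0 by
      intro i; exact hsuf i i rfl
    intro k
    induction k using Nat.strong_induction_on with
    | _ k ih =>
      intro i hik
      have happ := congrArg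
        (fun x : Fin n → ℚ => ∑ j, x j * (((F i).form (Pi.single j 1) : ℤ) : ℚ)) hg
      simp only [Finset.sum_apply, Pi.smul_apply, smul_eq_mul, Pi.zero_apply, zero_mul,
        Finset.sum_mul, Finset.sum_const_zero] at happ
      rw [Finset.sum_comm] at happ
      have hterm : ∀ i' : Fin m,
          ∑ j, g i' * (v i' j : ℚ) * (((F i).form (Pi.single j 1) : ℤ) : ℚ)
            = g i' * (((F i).form (v i') : ℤ) : ℚ) := by
        intro i'
        rw [← form_eq_sum_q ((F i).form) (v i'), Finset.mul_sum]
        refine Finset.sum_congr rfl fun j _ => by ring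
      rw [Finset.sum_congr rfl (fun i' _ => hterm i')] at happ
      have hsingle : ∑ i' : Fin m, g i' * (((F i).form (v i') : ℤ) : ℚ)
          = g i * (-1 : ℚ) := by
        rw [Finset.sum_eq_single i]
        · rw [hdiag i]; norm_num
        · intro b _ hb
          rcases lt_trichotomy (b : ℕ) (i : ℕ) with hlt | heq | hgt
          · rw [ih (b : ℕ) (by omega) b rfl, zero_mul]
          · exact absurd (Fin.ext heq) hb
          · rw [htri i b hgt]
            norm_num
        · intro hni
          exact absurd (Finset.mem_univ i) hni
      rw [hsingle] at happ
      linarith [happ]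
  refine ⟨hLI, ?_, ?_⟩
  · -- injectivity
    intro i j hij
    apply hLI.injective
    funext k
    simp [hij]
  · -- subset sums
    intro I hI hsum
    obtain ⟨i0, hi0⟩ := hI
    set g : Fin m → ℚ := fun i => if i ∈ I then 1 else 0 with hgdef
    have hzero : ∑ i, g i • (fun j : Fin n => ((v i j : ℚ))) = 0 := by
      funext j
      simp only [Finset.sum_apply, Pi.smul_apply, smul_eq_mul, Pi.zero_apply, hgdef,
        ite_mul, one_mul, zero_mul, Finset.sum_ite_mem, Finset.univ_inter]
      have h2 := congrFun hsum j
      simp only [Finset.sum_apply, Pi.zero_apply] at h2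
      exact_mod_cast h2
    have := Fintype.linearIndependent_iff.1 hLI g hzero i0
    rw [hgdef] at this
    simp [hi0] at this
end
end

section
/- Let P be a full-dimensional lattice polytope whose lattice points affinely generate ℤ^n, and let V ⊆ Col(P) be a rigid system with supporting graph F. Then: (b) a product v_1⋯v_n of elements of [V] exists strongly if and only if it exists weakly; (d) every w ∈ [V] has a decomposition into irreducible elements of [V], the irreducible elements are exactly those corresponding to the edges of F, and if V is Y-rigid then the decomposition of each w ∈ [V] as a product of irreducible elements is unique. -/
open Set

noncomputable section

open LatticePolytope

namespace S9

variable {n : ℕ} {P : LatticePolytope n} {V : Set (Fin n → ℤ)}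

/-- Bundled support data. -/
structure SD (P : LatticePolytope n) (V : Set (Fin n → ℤ)) (k : ℕ)
    (E : Fin k → Fin k → Prop) where
  hG : GoodGraph k E
  f : {w // w ∈ P.bra V} → {p : Fin k × Fin k // Relation.TransGen E p.1 p.2}
  hbij : Function.Bijective f
  hcomp : ∀ u v : {w // w ∈ P.bra V},
      (P.ProdEx u.1 v.1 ↔ (f u).1.2 = (f v).1.1) ∧
      ∀ h : u.1 + v.1 ∈ P.bra V, P.ProdEx u.1 v.1 →
        (f ⟨u.1 + v.1, h⟩).1 = ((f u).1.1, (f v).1.2)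

variable {k : ℕ} {E : Fin k → Fin k → Prop}

def SD.fp (D : SD P V k E) {w : Fin n → ℤ} (hw : w ∈ P.bra V) : Fin k × Fin k :=
  (D.f ⟨w, hw⟩).1

lemma SD.fp_cast (D : SD P V k E) {u v : Fin n → ℤ} (e : u = v)
    (hu : u ∈ P.bra V) (hv : v ∈ P.bra V) : D.fp hu = D.fp hv := by
  subst e; rfl

lemma SD.fp_tg (D : SD P V k E) {w : Fin n → ℤ} (hw : w ∈ P.bra V) :
    Relation.TransGen E (D.fp hw).1 (D.fp hw).2 := (D.f ⟨w, hw⟩).2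

lemma SD.prodEx_iff (D : SD P V k E) {u v : Fin n → ℤ} (hu : u ∈ P.bra V)
    (hv : v ∈ P.bra V) : P.ProdEx u v ↔ (D.fp hu).2 = (D.fp hv).1 :=
  (D.hcomp ⟨u, hu⟩ ⟨v, hv⟩).1

lemma SD.fp_add (D : SD P V k E) {u v : Fin n → ℤ} (hu : u ∈ P.bra V)
    (hv : v ∈ P.bra V) (hs : u + v ∈ P.bra V) (h : P.ProdEx u v) :
    D.fp hs = ((D.fp hu).1, (D.fp hv).2) :=
  (D.hcomp ⟨u, hu⟩ ⟨v, hv⟩).2 hs h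

lemma SD.fp_inj (D : SD P V k E) {u v : Fin n → ℤ} (hu : u ∈ P.bra V)
    (hv : v ∈ P.bra V) (h : D.fp hu = D.fp hv) : u = v := by
  have := D.hbij.1 (a₁ := ⟨u, hu⟩) (a₂ := ⟨v, hv⟩) (Subtype.ext h)
  exact congrArg Subtype.val this

lemma SD.fp_surj (D : SD P V k E) {a b : Fin k} (h : Relation.TransGen E a b) :
    ∃ (w : Fin n → ℤ) (hw : w ∈ P.bra V), D.fp hw = (a, b) := by
  obtain ⟨u, hu⟩ := D.hbij.2 ⟨(a, b), h⟩
  exact ⟨u.1, u.2, congrArg Subtype.val hu⟩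

lemma zero_not_bra (hneg : ∀ w ∈ P.bra V, -w ∉ P.bra V) :
    (0 : Fin n → ℤ) ∉ P.bra V := fun h => hneg 0 h (by simpa using h)

lemma weak_ne_nil {L : List (Fin n → ℤ)} (h : P.WeakProd L) : L ≠ [] := by
  induction h with
  | single v hv => simp
  | mul L₁ L₂ h₁ h₂ h ih₁ ih₂ => simp [ih₁]

lemma weak_colvec {L : List (Fin n → ℤ)} (h : P.WeakProd L) :
    ∀ x ∈ L, P.IsColVec x := by
  induction h with
  | single v hv => intro x hx; simp at hx; subst hx; exact hv
  | mul L₁ L₂ h₁ h₂ h ih₁ ih₂ =>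
    intro x hx
    rcases List.mem_append.1 hx with hx | hx
    · exact ih₁ x hx
    · exact ih₂ x hx

lemma mem_bra_add (hbk : P.bra V = P.ket V) {u v : Fin n → ℤ}
    (hu : u ∈ P.bra V) (hv : v ∈ P.bra V) (h : P.ProdEx u v) :
    u + v ∈ P.bra V := by
  rw [hbk] at hu hv ⊢
  obtain ⟨L₁, e₁, w₁, s₁⟩ := hu
  obtain ⟨L₂, e₂, w₂, s₂⟩ := hv
  refine ⟨L₁ ++ L₂, ?_, ?_, by rw [List.sum_append, s₁, s₂]⟩
  · intro x hx
    rcases List.mem_append.1 hx with hx | hx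
    · exact e₁ x hx
    · exact e₂ x hx
  · exact LatticePolytope.WeakProd.mul L₁ L₂ w₁ w₂ (by rw [s₁, s₂]; exact h)

lemma strong_single {v : Fin n → ℤ} (hv : P.IsColVec v) : P.StrongProd [v] := by
  refine ⟨by simp, ?_, ?_, ?_⟩
  · intro x hx; simp at hx; subst hx; exact hv
  · intro i h; simp at h
  · intro r s h1 h2; simp at h2; omega

lemma mem_bra_of_V (hVC : V ⊆ P.Col) {v : Fin n → ℤ} (hv : v ∈ V) :
    v ∈ P.bra V := ⟨[v], by simpa using hv, strong_single (hVC hv), by simp⟩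

/-- A vertex chain realizing a list of elements of `[V]`. -/
def SD.Chain (D : SD P V k E) (L : List (Fin n → ℤ)) (c : ℕ → Fin k) : Prop :=
  ∀ (i : ℕ) (h : i < L.length),
    ∃ hw : L.get ⟨i, h⟩ ∈ P.bra V, D.fp hw = (c i, c (i + 1))

lemma SD.chain_seg (D : SD P V k E) (hbk : P.bra V = P.ket V)
    {L : List (Fin n → ℤ)} {c : ℕ → Fin k} (hc : D.Chain L c) :
    ∀ len r, 1 ≤ len → r + len ≤ L.length →
      ∃ h : ((L.drop r).take len).sum ∈ P.bra V, D.fp h = (c r, c (r + len)) := by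
  intro len
  induction len with
  | zero => omega
  | succ m ih =>
    intro r _ hle
    rcases Nat.eq_zero_or_pos m with hm | hm
    · subst hm
      have hr : r < L.length := by omega
      obtain ⟨hw, he⟩ := hc r hr
      rw [List.take_one_drop_eq_of_lt_length hr]
      exact ⟨by simpa using hw, by simpa using he⟩
    · obtain ⟨hS, eS⟩ := ih r hm (by omega)
      have hrm : r + m < L.length := by omega
      obtain ⟨hx, ex⟩ := hc (r + m) hrm
      have hget : (L.drop r)[m]? = some (L.get ⟨r + m, hrm⟩) := by
        rw [List.getElem?_drop]
        exact List.getElem?_eq_getElem hrm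
      have htake : (L.drop r).take (m + 1) =
          (L.drop r).take m ++ [L.get ⟨r + m, hrm⟩] := by
        rw [List.take_succ, hget]; rfl
      have pe : P.ProdEx ((L.drop r).take m).sum (L.get ⟨r + m, hrm⟩) :=
        (D.prodEx_iff hS hx).2 (by rw [eS, ex])
      have mem := mem_bra_add hbk hS hx pe
      have mem' : ((L.drop r).take (m + 1)).sum ∈ P.bra V := by
        rw [htake, List.sum_append]; simpa using mem
      refine ⟨mem', ?_⟩
      rw [D.fp_cast (by rw [htake, List.sum_append]; simp) mem' mem,
        D.fp_add hS hx mem pe, eS, ex]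
      rfl

lemma SD.chain_strong (D : SD P V k E) (hbk : P.bra V = P.ket V)
    (hneg : ∀ w ∈ P.bra V, -w ∉ P.bra V)
    {L : List (Fin n → ℤ)} {c : ℕ → Fin k}
    (hcv : ∀ x ∈ L, P.IsColVec x) (hne : L ≠ []) (hc : D.Chain L c) :
    P.StrongProd L := by
  refine ⟨hne, hcv, ?_, ?_⟩
  · intro i h
    obtain ⟨h1, e1⟩ := hc i (Nat.lt_of_succ_lt h)
    obtain ⟨h2, e2⟩ := hc (i + 1) h
    exact (D.prodEx_iff h1 h2).2 (by rw [e1, e2])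
  · intro r s hrs hs
    obtain ⟨hmem, -⟩ := D.chain_seg hbk hc (s + 1 - r) r (by omega) (by omega)
    intro h0
    rw [h0] at hmem
    exact zero_not_bra hneg hmem

lemma SD.chain_weak (D : SD P V k E) (hbk : P.bra V = P.ket V) {c : ℕ → Fin k} :
    ∀ L : List (Fin n → ℤ), (∀ x ∈ L, P.IsColVec x) → D.Chain L c → L ≠ [] →
      P.WeakProd L := by
  intro L
  induction L using List.reverseRecOn with
  | nil => intro _ _ h; exact absurd rfl h
  | append_singleton M x ih =>
    intro hcv hc _
    rcases eq_or_ne M [] with hM | hM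
    · subst hM
      exact LatticePolytope.WeakProd.single x (hcv x (by simp))
    · have hMlt : M.length < (M ++ [x]).length := by simp
      have hcM : D.Chain M c := by
        intro i h
        have h' : i < (M ++ [x]).length := by simp only [List.length_append]; omega
        obtain ⟨hw, e⟩ := hc i h'
        have egt : (M ++ [x]).get ⟨i, h'⟩ = M.get ⟨i, h⟩ := List.getElem_append_left h
        exact ⟨egt ▸ hw, (D.fp_cast egt.symm (egt ▸ hw) hw).trans e⟩
      have hwM := ih (fun y hy => hcv y (List.mem_append_left _ hy)) hcM hM
      obtain ⟨hsM, esM⟩ := D.chain_seg hbk hc M.length 0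
        (by have := List.length_pos_iff.2 hM; omega) (by simpa using Nat.le_of_lt hMlt)
      obtain ⟨hx, ex⟩ := hc M.length hMlt
      have hgx : (M ++ [x]).get ⟨M.length, hMlt⟩ = x := by simp
      have hx' : x ∈ P.bra V := hgx ▸ hx
      have ex' : D.fp hx' = (c M.length, c (M.length + 1)) :=
        (D.fp_cast hgx.symm hx' hx).trans ex
      have hsum : (((M ++ [x]).drop 0).take M.length).sum = M.sum := by
        rw [List.drop_zero, List.take_left]
      have hsM' : M.sum ∈ P.bra V := hsum ▸ hsM
      have pe : P.ProdEx M.sum x := by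
        refine (D.prodEx_iff hsM' hx').2 ?_
        rw [D.fp_cast hsum.symm hsM' hsM, esM, ex']
        simp
      exact LatticePolytope.WeakProd.mul M [x] hwM
        (LatticePolytope.WeakProd.single x (hcv x (by simp))) (by simpa using pe)

lemma SD.chain_of_weak (D : SD P V k E) (hbk : P.bra V = P.ket V)
    {L : List (Fin n → ℤ)} (h : P.WeakProd L) (hb : ∀ x ∈ L, x ∈ P.bra V) :
    ∃ c : ℕ → Fin k, D.Chain L c ∧
      ∃ hs : L.sum ∈ P.bra V, D.fp hs = (c 0, c L.length) := by
  induction h with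
  | single v hv =>
    have hvb : v ∈ P.bra V := hb v (by simp)
    set c : ℕ → Fin k := fun i => if i = 0 then (D.fp hvb).1 else (D.fp hvb).2
      with hcdef
    have c0 : c 0 = (D.fp hvb).1 := by simp [hcdef]
    have c1 : c 1 = (D.fp hvb).2 := by simp [hcdef]
    refine ⟨c, ?_, ?_⟩
    · intro i h
      have : i = 0 := by simpa using h
      subst this
      exact ⟨hvb, by rw [c0, c1]⟩
    · have e : ([v] : List (Fin n → ℤ)).sum = v := by simp
      have hsv : ([v] : List (Fin n → ℤ)).sum ∈ P.bra V := by rw [e]; exact hvb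
      refine ⟨hsv, ?_⟩
      rw [D.fp_cast e hsv hvb]
      simp only [List.length_singleton]
      rw [c0, c1]
  | mul L₁ L₂ h₁ h₂ hp ih₁ ih₂ =>
    obtain ⟨c₁, hc₁, hs₁, es₁⟩ := ih₁ (fun x hx => hb x (List.mem_append_left _ hx))
    obtain ⟨c₂, hc₂, hs₂, es₂⟩ := ih₂ (fun x hx => hb x (List.mem_append_right _ hx))
    have hL₁p : 0 < L₁.length := List.length_pos_iff.2 (weak_ne_nil h₁)
    have hmatch : c₁ L₁.length = c₂ 0 := by
      have := (D.prodEx_iff hs₁ hs₂).1 hp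
      rw [es₁, es₂] at this
      simpa using this
    set c : ℕ → Fin k := fun i => if i < L₁.length then c₁ i else c₂ (i - L₁.length)
      with hcdef
    have ca : ∀ j, j < L₁.length → c j = c₁ j := by
      intro j hj; simp [hcdef, hj]
    have cb : ∀ j, L₁.length ≤ j → c j = c₂ (j - L₁.length) := by
      intro j hj; simp [hcdef, show ¬ j < L₁.length from by omega]
    refine ⟨c, ?_, ?_⟩
    · intro i h
      have hlen : i < L₁.length + L₂.length := by
        simpa [List.length_append] using h
      rcases Nat.lt_or_ge i L₁.length with hi | hi
      · obtain ⟨hw, e⟩ := hc₁ i hi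
        have egt : (L₁ ++ L₂).get ⟨i, h⟩ = L₁.get ⟨i, hi⟩ := List.getElem_append_left hi
        refine ⟨egt ▸ hw, ?_⟩
        rw [(D.fp_cast egt (egt ▸ hw) hw), e, ca i hi]
        rcases Nat.lt_or_ge (i + 1) L₁.length with h2 | h2
        · rw [ca (i + 1) h2]
        · have h3 : i + 1 = L₁.length := by omega
          rw [cb (i + 1) h2, h3, Nat.sub_self, ← hmatch]
      · have hi2 : i - L₁.length < L₂.length := by omega
        obtain ⟨hw, e⟩ := hc₂ (i - L₁.length) hi2
        have egt : (L₁ ++ L₂).get ⟨i, h⟩ = L₂.get ⟨i - L₁.length, hi2⟩ :=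
          List.getElem_append_right hi
        refine ⟨egt ▸ hw, ?_⟩
        rw [(D.fp_cast egt (egt ▸ hw) hw), e, cb i hi, cb (i + 1) (by omega),
          show i + 1 - L₁.length = i - L₁.length + 1 from by omega]
    · have mem := mem_bra_add hbk hs₁ hs₂ hp
      have e : (L₁ ++ L₂).sum = L₁.sum + L₂.sum := List.sum_append
      have mem' : (L₁ ++ L₂).sum ∈ P.bra V := by rw [e]; exact mem
      refine ⟨mem', ?_⟩
      rw [D.fp_cast e mem' mem, D.fp_add hs₁ hs₂ mem hp, es₁, es₂,
        List.length_append, ca 0 hL₁p, cb (L₁.length + L₂.length) (by omega),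
        Nat.add_sub_cancel_left]

lemma SD.chain_of_strong (D : SD P V k E) {L : List (Fin n → ℤ)}
    (hS : P.StrongProd L) (hb : ∀ x ∈ L, x ∈ P.bra V) :
    ∃ c : ℕ → Fin k, D.Chain L c := by
  classical
  have hne := hS.1
  have hlen : 0 < L.length := List.length_pos_iff.2 hne
  have hlast : L.length - 1 < L.length := by omega
  set c : ℕ → Fin k := fun i => if h : i < L.length
    then (D.fp (hb _ (List.get_mem L ⟨i, h⟩))).1
    else (D.fp (hb _ (List.get_mem L ⟨L.length - 1, hlast⟩))).2 with hcdef
  have ca : ∀ j (hj : j < L.length), c j = (D.fp (hb _ (List.get_mem L ⟨j, hj⟩))).1 := by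
    intro j hj; simp [hcdef, hj]
  have cb : ∀ j, L.length ≤ j →
      c j = (D.fp (hb _ (List.get_mem L ⟨L.length - 1, hlast⟩))).2 := by
    intro j hj; simp [hcdef, show ¬ j < L.length from by omega]
  refine ⟨c, ?_⟩
  intro i h
  refine ⟨hb _ (List.get_mem L ⟨i, h⟩), ?_⟩
  rw [ca i h]
  rcases Nat.lt_or_ge (i + 1) L.length with h2 | h2
  · rw [ca (i + 1) h2]
    have pe := hS.2.2.1 i h2
    have := (D.prodEx_iff (hb _ (List.get_mem L ⟨i, h⟩))
      (hb _ (List.get_mem L ⟨i + 1, h2⟩))).1 pe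
    rw [Prod.ext_iff]
    exact ⟨rfl, this⟩
  · rw [cb (i + 1) h2]
    have h3 : L.length - 1 = i := by omega
    have egt : L.get ⟨L.length - 1, hlast⟩ = L.get ⟨i, h⟩ :=
      congrArg L.get (Fin.ext h3)
    rw [D.fp_cast egt (hb _ (List.get_mem L ⟨L.length - 1, hlast⟩))
      (hb _ (List.get_mem L ⟨i, h⟩))]

lemma SD.irred_iff (D : SD P V k E) (hbk : P.bra V = P.ket V)
    {w : Fin n → ℤ} (hw : w ∈ P.bra V) :
    P.Irred V w ↔ E (D.fp hw).1 (D.fp hw).2 := by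
  constructor
  · rintro ⟨-, hno⟩
    by_contra hE
    have htg := D.fp_tg hw
    cases htg with
    | single h => exact hE h
    | tail h1 h2 =>
      rename_i m
      obtain ⟨u, hu, hfu⟩ := D.fp_surj h1
      obtain ⟨v, hv, hfv⟩ := D.fp_surj (Relation.TransGen.single h2)
      have pe : P.ProdEx u v := (D.prodEx_iff hu hv).2 (by rw [hfu, hfv])
      have mem := mem_bra_add hbk hu hv pe
      have he : u + v = w := D.fp_inj mem hw
        (by rw [D.fp_add hu hv mem pe, hfu, hfv])
      exact hno ⟨u, v, by rw [← hbk]; exact hu, by rw [← hbk]; exact hv, pe, he⟩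
  · intro hE
    refine ⟨hw, ?_⟩
    rintro ⟨u, v, hu, hv, pe, he⟩
    have hu' : u ∈ P.bra V := by rw [hbk]; exact hu
    have hv' : v ∈ P.bra V := by rw [hbk]; exact hv
    have mem : u + v ∈ P.bra V := mem_bra_add hbk hu' hv' pe
    have e1 : D.fp mem = ((D.fp hu').1, (D.fp hv').2) := D.fp_add hu' hv' mem pe
    have e2 : D.fp mem = D.fp hw := D.fp_cast he mem hw
    have hm : (D.fp hu').2 = (D.fp hv').1 := (D.prodEx_iff hu' hv').1 pe
    refine D.hG.unique_path _ _ hE ⟨(D.fp hu').2, ?_, ?_⟩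
    · have := D.fp_tg hu'
      rw [← e2, e1] at *
      simpa using D.fp_tg hu'
    · have := D.fp_tg hv'
      rw [hm]
      have h3 : (D.fp hw).2 = (D.fp hv').2 := by rw [← e2, e1]
      rw [h3]
      exact D.fp_tg hv'

lemma irred_mem_V (hbk : P.bra V = P.ket V) {w : Fin n → ℤ}
    (h : P.Irred V w) : w ∈ V := by
  obtain ⟨hw, hno⟩ := h
  rw [hbk] at hw
  obtain ⟨L, hLV, hLw, hsum⟩ := hw
  cases hLw with
  | single v hv =>
    have : v = w := by simpa using hsum
    subst this
    exact hLV v (by simp)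
  | mul L₁ L₂ h₁ h₂ hp =>
    refine absurd ?_ hno
    refine ⟨L₁.sum, L₂.sum, ?_, ?_, hp, by rw [← hsum, List.sum_append]⟩
    · exact ⟨L₁, fun x hx => hLV x (List.mem_append_left _ hx), h₁, rfl⟩
    · exact ⟨L₂, fun x hx => hLV x (List.mem_append_right _ hx), h₂, rfl⟩

lemma SD.decomp (D : SD P V k E) (hbk : P.bra V = P.ket V)
    (hneg : ∀ w ∈ P.bra V, -w ∉ P.bra V) (hVC : V ⊆ P.Col) :
    ∀ a b : Fin k, Relation.TransGen E a b →
      ∀ (w : Fin n → ℤ) (hw : w ∈ P.bra V), D.fp hw = (a, b) →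
        ∃ L : List (Fin n → ℤ),
          (∀ x ∈ L, P.Irred V x) ∧ P.StrongProd L ∧ L.sum = w := by
  intro a b h
  induction h with
  | single hE =>
    intro w hw hfp
    have hIr : P.Irred V w := (D.irred_iff hbk hw).2 (by rw [hfp]; exact hE)
    refine ⟨[w], by simpa using hIr, strong_single (hVC (irred_mem_V hbk hIr)), by simp⟩
  | tail h1 hE ih =>
    rename_i mid m
    intro w hw hfp
    obtain ⟨u, hu, hfu⟩ := D.fp_surj h1
    obtain ⟨v, hv, hfv⟩ := D.fp_surj (Relation.TransGen.single hE)
    obtain ⟨L, hLirr, hLs, hLsum⟩ := ih u hu hfu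
    have pe : P.ProdEx u v := (D.prodEx_iff hu hv).2 (by rw [hfu, hfv])
    have mem := mem_bra_add hbk hu hv pe
    have hweq : u + v = w := D.fp_inj mem hw
      (by rw [D.fp_add hu hv mem pe, hfu, hfv, hfp])
    have hvIr : P.Irred V v := (D.irred_iff hbk hv).2 (by rw [hfv]; exact hE)
    obtain ⟨c0, hc0⟩ := D.chain_of_strong hLs (fun x hx => (hLirr x hx).1)
    have hLpos : 0 < L.length := List.length_pos_iff.2 hLs.1
    obtain ⟨hs, es⟩ := D.chain_seg hbk hc0 L.length 0 (by omega) (by omega)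
    have hsum0 : ((L.drop 0).take L.length).sum = u := by
      rw [List.drop_zero, List.take_length]; exact hLsum
    have hcend : c0 L.length = (D.fp hv).1 := by
      have e1 : D.fp hs = D.fp hu := D.fp_cast hsum0 hs hu
      have : (c0 0, c0 (0 + L.length)) = (a, mid) := by rw [← es, e1, hfu]
      rw [hfv]
      have := congrArg Prod.snd this
      simpa using this
    set c' : ℕ → Fin k := fun i => if i < L.length then c0 i
      else if i = L.length then (D.fp hv).1 else (D.fp hv).2 with hcdef
    have ca : ∀ j, j < L.length → c' j = c0 j := by
      intro j hj; simp [hcdef, hj]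
    have cbm : c' L.length = (D.fp hv).1 := by simp [hcdef]
    have cbt : ∀ j, L.length < j → c' j = (D.fp hv).2 := by
      intro j hj
      simp [hcdef, show ¬ j < L.length from by omega, show ¬ j = L.length from by omega]
    have hchain : D.Chain (L ++ [v]) c' := by
      intro i hi
      have hlen : i < L.length + 1 := by simpa using hi
      rcases Nat.lt_or_ge i L.length with h2 | h2
      · obtain ⟨hwi, ei⟩ := hc0 i h2
        have egt : (L ++ [v]).get ⟨i, hi⟩ = L.get ⟨i, h2⟩ := List.getElem_append_left h2
        refine ⟨egt ▸ hwi, ?_⟩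
        rw [D.fp_cast egt (egt ▸ hwi) hwi, ei, ca i h2]
        rcases Nat.lt_or_ge (i + 1) L.length with h3 | h3
        · rw [ca (i + 1) h3]
        · have h4 : i + 1 = L.length := by omega
          rw [h4, cbm, ← hcend]
      · have h2' : i = L.length := by omega
        subst h2'
        have egt : (L ++ [v]).get ⟨L.length, hi⟩ = v := by simp
        have hvm : (L ++ [v]).get ⟨L.length, hi⟩ ∈ P.bra V := by rw [egt]; exact hv
        refine ⟨hvm, ?_⟩
        rw [D.fp_cast egt hvm hv, cbm, cbt (L.length + 1) (by omega)]
    refine ⟨L ++ [v], ?_, ?_, ?_⟩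
    · intro x hx
      rcases List.mem_append.1 hx with hx | hx
      · exact hLirr x hx
      · simp at hx; subst hx; exact hvIr
    · refine D.chain_strong hbk hneg ?_ (by simp) hchain
      intro x hx
      rcases List.mem_append.1 hx with hx | hx
      · exact hVC (irred_mem_V hbk (hLirr x hx))
      · simp at hx; subst hx; exact hVC (irred_mem_V hbk hvIr)
    · rw [List.sum_append, hLsum]; simpa using hweq

lemma good_acyclic (hG : GoodGraph k E) : ∀ a, ¬ Relation.TransGen E a a := by
  intro a ha
  obtain ⟨x, hax, -⟩ := Relation.TransGen.head'_iff.1 ha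
  exact hG.unique_path a x hax ⟨a, ha, Relation.TransGen.single hax⟩

lemma chain_tg {c : ℕ → Fin k} {m : ℕ} (hedge : ∀ i < m, E (c i) (c (i + 1))) :
    ∀ len r, 1 ≤ len → r + len ≤ m → Relation.TransGen E (c r) (c (r + len)) := by
  intro len
  induction len with
  | zero => omega
  | succ s ih =>
    intro r _ hle
    rcases Nat.eq_zero_or_pos s with hs | hs
    · subst hs
      exact Relation.TransGen.single (hedge r (by omega))
    · exact Relation.TransGen.tail (ih r hs (by omega)) (hedge (r + s) (by omega))

lemma SD.unique (D : SD P V k E) (hY : IsYGraph k E)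
    (hbk : P.bra V = P.ket V) :
    ∀ (w : Fin n → ℤ), w ∈ P.bra V → ∀ L L' : List (Fin n → ℤ),
      ((∀ x ∈ L, P.Irred V x) ∧ P.StrongProd L ∧ L.sum = w) →
      ((∀ x ∈ L', P.Irred V x) ∧ P.StrongProd L' ∧ L'.sum = w) → L = L' := by
  rintro w hw L L' ⟨hI, hS, hsum⟩ ⟨hI', hS', hsum'⟩
  obtain ⟨c, hc⟩ := D.chain_of_strong hS (fun x hx => (hI x hx).1)
  obtain ⟨c', hc'⟩ := D.chain_of_strong hS' (fun x hx => (hI' x hx).1)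
  have hm : 0 < L.length := List.length_pos_iff.2 hS.1
  have hm' : 0 < L'.length := List.length_pos_iff.2 hS'.1
  have hedge : ∀ i < L.length, E (c i) (c (i + 1)) := by
    intro i h
    obtain ⟨hwi, ei⟩ := hc i h
    have := (D.irred_iff hbk hwi).1 (hI _ (List.get_mem _ _))
    rwa [ei] at this
  have hedge' : ∀ i < L'.length, E (c' i) (c' (i + 1)) := by
    intro i h
    obtain ⟨hwi, ei⟩ := hc' i h
    have := (D.irred_iff hbk hwi).1 (hI' _ (List.get_mem _ _))
    rwa [ei] at this
  have hend : (c 0, c L.length) = (c' 0, c' L'.length) := by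
    obtain ⟨hs, es⟩ := D.chain_seg hbk hc L.length 0 (by omega) (by omega)
    obtain ⟨hs', es'⟩ := D.chain_seg hbk hc' L'.length 0 (by omega) (by omega)
    have e0 : ((L.drop 0).take L.length).sum = ((L'.drop 0).take L'.length).sum := by
      simp [hsum, hsum']
    have e1 : D.fp hs = D.fp hs' := D.fp_cast e0 hs hs'
    have := es.symm.trans (e1.trans es')
    simpa using this
  have hc0 : c 0 = c' 0 := congrArg Prod.fst hend
  have hcl : c L.length = c' L'.length := congrArg Prod.snd hend
  have hback : ∀ i, i ≤ L.length → i ≤ L'.length →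
      c (L.length - i) = c' (L'.length - i) := by
    intro i
    induction i with
    | zero => intro _ _; simpa using hcl
    | succ j ih =>
      intro h1 h2
      have e := ih (by omega) (by omega)
      have E1 : E (c (L.length - (j + 1))) (c (L.length - j)) := by
        have := hedge (L.length - (j + 1)) (by omega)
        rwa [show L.length - (j + 1) + 1 = L.length - j from by omega] at this
      have E2 : E (c' (L'.length - (j + 1))) (c' (L'.length - j)) := by
        have := hedge' (L'.length - (j + 1)) (by omega)
        rwa [show L'.length - (j + 1) + 1 = L'.length - j from by omega] at this
      exact hY _ _ _ (e ▸ E1) E2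
  have hmm : L.length = L'.length := by
    by_contra hne
    rcases Nat.lt_or_ge L.length L'.length with hlt | hge
    · have h1 : c 0 = c' (L'.length - L.length) := by
        have := hback L.length le_rfl (by omega)
        simpa using this
      have h2 : c' (L'.length - L.length) = c' 0 := by rw [← h1, hc0]
      have h3 : Relation.TransGen E (c' 0) (c' (L'.length - L.length)) := by
        have := chain_tg hedge' (L'.length - L.length) 0 (by omega) (by omega)
        simpa using this
      rw [h2] at h3
      exact good_acyclic D.hG _ h3
    · have hlt : L'.length < L.length := by omega
      have h1 : c (L.length - L'.length) = c' 0 := by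
        have := hback L'.length (by omega) le_rfl
        simpa using this
      have h2 : c (L.length - L'.length) = c 0 := by rw [h1, hc0]
      have h3 : Relation.TransGen E (c 0) (c (L.length - L'.length)) := by
        have := chain_tg hedge (L.length - L'.length) 0 (by omega) (by omega)
        simpa using this
      rw [h2] at h3
      exact good_acyclic D.hG _ h3
  have hcc : ∀ j, j ≤ L.length → c j = c' j := by
    intro j hj
    have := hback (L.length - j) (by omega) (by omega)
    rwa [show L.length - (L.length - j) = j from by omega,
      show L'.length - (L.length - j) = j from by omega] at this
  refine List.ext_get hmm ?_
  intro i h1 h2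
  obtain ⟨hwi, ei⟩ := hc i h1
  obtain ⟨hwi', ei'⟩ := hc' i h2
  refine D.fp_inj hwi hwi' ?_
  rw [ei, ei', hcc i (by omega), hcc (i + 1) (by omega)]

end S9

/-- For a rigid system `V` with supporting graph `E`: weak and strong
existence of products of elements of `[V]` coincide; every element of `[V]`
decomposes into irreducibles; the irreducibles are exactly the elements
corresponding to edges; and the decomposition is unique if `V` is `Y`-rigid. -/
theorem statement9 {n : ℕ} (P : LatticePolytope n) (hfd : P.IsFullDim)
    (hgen : P.AffGen) (V : Set (Fin n → ℤ)) (hV : P.IsRigid V)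
    (k : ℕ) (E : Fin k → Fin k → Prop) (hG : GoodGraph k E)
    (f : {w // w ∈ P.bra V} → {p : Fin k × Fin k // Relation.TransGen E p.1 p.2})
    (hbij : Function.Bijective f)
    (hcomp : ∀ u v : {w // w ∈ P.bra V},
      (P.ProdEx u.1 v.1 ↔ (f u).1.2 = (f v).1.1) ∧
      ∀ h : u.1 + v.1 ∈ P.bra V, P.ProdEx u.1 v.1 →
        (f ⟨u.1 + v.1, h⟩).1 = ((f u).1.1, (f v).1.2)) :
    (∀ L : List (Fin n → ℤ), L ≠ [] → (∀ x ∈ L, x ∈ P.bra V) →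
      (P.WeakProd L ↔ P.StrongProd L)) ∧
    (∀ w ∈ P.bra V, ∃ L : List (Fin n → ℤ),
      (∀ x ∈ L, P.Irred V x) ∧ P.StrongProd L ∧ L.sum = w) ∧
    (∀ w, ∀ hw : w ∈ P.bra V,
      (P.Irred V w ↔ E (f ⟨w, hw⟩).1.1 (f ⟨w, hw⟩).1.2)) ∧
    (P.IsYRigid V → ∀ w ∈ P.bra V, ∀ L L' : List (Fin n → ℤ),
      ((∀ x ∈ L, P.Irred V x) ∧ P.StrongProd L ∧ L.sum = w) →
      ((∀ x ∈ L', P.Irred V x) ∧ P.StrongProd L' ∧ L'.sum = w) → L = L') := by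

  obtain ⟨hVC, hneg, hbk, -⟩ := hV
  let D : S9.SD P V k E := ⟨hG, f, hbij, hcomp⟩
  refine ⟨?_, ?_, ?_, ?_⟩
  · intro L hne hb
    constructor
    · intro hwk
      obtain ⟨c, hc, -⟩ := D.chain_of_weak hbk hwk hb
      exact D.chain_strong hbk hneg (S9.weak_colvec hwk) hne hc
    · intro hst
      obtain ⟨c, hc⟩ := D.chain_of_strong hst hb
      exact D.chain_weak hbk L hst.2.1 hc hne
  · intro w hw
    exact D.decomp hbk hneg hVC (D.fp hw).1 (D.fp hw).2 (D.fp_tg hw) w hw rfl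
  · intro w hw
    exact D.irred_iff hbk hw
  · rintro ⟨-, -, -, k', E', hYg, hGG, f', hbij', hcomp'⟩
    exact S9.SD.unique ⟨hGG, f', hbij', hcomp'⟩ hYg hbk
end
end
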